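/- arXiv:2509.04817 — 12 statements merged into one kernel-verified Lean document; each statement's English description precedes it below -/
import Mathlib

section
/- For every complex number s with s² + d·s ≠ 0, every complex z with k·z² = s² + d·s, and assuming η ≠ 0, the functions f₁, f₂ : ℝ → ℂ defined by f₁(x) = (1/(s² + d·s))·(1 − cosh(z·x) + (β₁/η)·sinh(z·x)) and f₂(x) = (1/(s² + d·s))·(1 − cosh(z·(ℓ − x)) + (β₂/η)·sinh(z·(ℓ − x))) are twice differentiable on ℝ and satisfy, for every x ∈ ℝ, k·f₁''(x) = (s² + d·s)·f₁(x) − 1 and k·f₂''(x) = (s² + d·s)·f₂(x) − 1; in particular both branches of the uniform-forcing displacement transfer function of Theorem 3.1 satisfy the Laplace-domain ODE (s² + d·s)·Q = k·Q_xx + 1 on (0, 𝔭) ∪ (𝔭, ℓ). -/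
/-!
Both branches have the form `A + B cosh (a + b x) + C sinh (a + b x)` with `k b² = s² + d s`,
so `cosh` and `sinh` contribute solutions of the homogeneous equation `k f'' = (s² + d s) f`,
while the constant `A = 1 / (s² + d s)` is a particular solution of `k f'' = (s² + d s) f - 1`.
-/

open Complex

noncomputable def hypAffine (A B C a b : ℂ) (x : ℝ) : ℂ :=
  A + B * cosh (a + b * x) + C * sinh (a + b * x)

theorem hasDerivAt_hypAffine (A B C a b : ℂ) (x : ℝ) :
    HasDerivAt (hypAffine A B C a b) (hypAffine 0 (b * C) (b * B) a b x) x := by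
  have hlin : HasDerivAt (fun x : ℝ => a + b * (x : ℂ)) b x := by
    simpa using (ofRealCLM.hasDerivAt (x := x)).const_mul b |>.const_add a
  have hcosh := (hasDerivAt_cosh (a + b * x)).comp x hlin
  have hsinh := (hasDerivAt_sinh (a + b * x)).comp x hlin
  exact (((hcosh.const_mul B).const_add A).add (hsinh.const_mul C)).congr_deriv
    (by simp only [hypAffine]; ring)

theorem deriv_hypAffine (A B C a b : ℂ) :
    deriv (hypAffine A B C a b) = hypAffine 0 (b * C) (b * B) a b :=
  funext fun x => (hasDerivAt_hypAffine A B C a b x).deriv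

theorem differentiable_hypAffine (A B C a b : ℂ) : Differentiable ℝ (hypAffine A B C a b) :=
  fun x => (hasDerivAt_hypAffine A B C a b x).differentiableAt

theorem hypAffine_ode {K S A B C a b : ℂ} (hb : K * b ^ 2 = S) (hA : S * A = 1) :
    Differentiable ℝ (hypAffine A B C a b) ∧
      Differentiable ℝ (deriv (hypAffine A B C a b)) ∧
      ∀ x : ℝ, K * deriv (deriv (hypAffine A B C a b)) x = S * hypAffine A B C a b x - 1 := by
  refine ⟨differentiable_hypAffine _ _ _ _ _, ?_, fun x => ?_⟩
  · rw [deriv_hypAffine]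
    exact differentiable_hypAffine _ _ _ _ _
  · simp only [deriv_hypAffine, hypAffine]
    linear_combination (B * cosh (a + b * x) + C * sinh (a + b * x)) * hb - hA

theorem uniform_forcing_branches_satisfy_ode_general
    (ℓ k d : ℝ)
    (s z : ℂ) (hs : s ^ 2 + (d : ℂ) * s ≠ 0)
    (hz : (k : ℂ) * z ^ 2 = s ^ 2 + (d : ℂ) * s)
    (β₁ β₂ η : ℂ)
    (f₁ f₂ : ℝ → ℂ)
    (hf₁ : f₁ = fun x : ℝ => (1 / (s ^ 2 + (d : ℂ) * s)) *
      (1 - Complex.cosh (z * (x : ℂ)) + (β₁ / η) * Complex.sinh (z * (x : ℂ))))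
    (hf₂ : f₂ = fun x : ℝ => (1 / (s ^ 2 + (d : ℂ) * s)) *
      (1 - Complex.cosh (z * ((ℓ : ℂ) - (x : ℂ))) +
        (β₂ / η) * Complex.sinh (z * ((ℓ : ℂ) - (x : ℂ))))) :
    (Differentiable ℝ f₁ ∧ Differentiable ℝ (deriv f₁) ∧
      ∀ x : ℝ, (k : ℂ) * deriv (deriv f₁) x = (s ^ 2 + (d : ℂ) * s) * f₁ x - 1) ∧
    (Differentiable ℝ f₂ ∧ Differentiable ℝ (deriv f₂) ∧
      ∀ x : ℝ, (k : ℂ) * deriv (deriv f₂) x = (s ^ 2 + (d : ℂ) * s) * f₂ x - 1) := by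
  set S := s ^ 2 + (d : ℂ) * s
  have hA : S * (1 / S) = 1 := mul_one_div_cancel hs
  have hf₁' : f₁ = hypAffine (1 / S) (-(1 / S)) (1 / S * (β₁ / η)) 0 z := by
    funext x
    simp only [hf₁, hypAffine, zero_add]
    ring
  have hf₂' : f₂ = hypAffine (1 / S) (-(1 / S)) (1 / S * (β₂ / η)) (z * ℓ) (-z) := by
    funext x
    simp only [hf₂, hypAffine]
    ring_nf
  rw [hf₁', hf₂']
  exact ⟨hypAffine_ode hz hA, hypAffine_ode (by rw [← hz]; ring) hA⟩

/-- Both branches of the uniform-forcing displacement transfer function satisfy the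
Laplace-domain ODE `(s² + d·s)·Q = k·Q_xx + 1`. -/
theorem uniform_forcing_branches_satisfy_ode
    (ℓ k d p g : ℝ) (hℓ : 0 < ℓ) (hk : 0 < k) (hd : 0 < d)
    (hp0 : 0 < p) (hpℓ : p < ℓ) (hg : 0 ≤ g)
    (s z : ℂ) (hs : s ^ 2 + (d : ℂ) * s ≠ 0)
    (hz : (k : ℂ) * z ^ 2 = s ^ 2 + (d : ℂ) * s)
    (β₁ β₂ η : ℂ)
    (hβ₁ : β₁ = 2 * (k : ℂ) * z * Complex.sinh (z * (ℓ : ℂ) / 2) ^ 2 +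
      2 * (g : ℂ) * s * Complex.sinh (z * ((ℓ : ℂ) - (p : ℂ))) *
        Complex.sinh (z * (p : ℂ) / 2) ^ 2)
    (hβ₂ : β₂ = 2 * (k : ℂ) * z * Complex.sinh (z * (ℓ : ℂ) / 2) ^ 2 +
      2 * (g : ℂ) * s * Complex.sinh (z * (p : ℂ)) *
        Complex.sinh (z * ((ℓ : ℂ) - (p : ℂ)) / 2) ^ 2)
    (hη : η = (k : ℂ) * z * Complex.sinh (z * (ℓ : ℂ)) +
      (g : ℂ) * s * Complex.sinh (z * (p : ℂ)) * Complex.sinh (z * ((ℓ : ℂ) - (p : ℂ))))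
    (hη0 : η ≠ 0)
    (f₁ f₂ : ℝ → ℂ)
    (hf₁ : f₁ = fun x : ℝ => (1 / (s ^ 2 + (d : ℂ) * s)) *
      (1 - Complex.cosh (z * (x : ℂ)) + (β₁ / η) * Complex.sinh (z * (x : ℂ))))
    (hf₂ : f₂ = fun x : ℝ => (1 / (s ^ 2 + (d : ℂ) * s)) *
      (1 - Complex.cosh (z * ((ℓ : ℂ) - (x : ℂ))) +
        (β₂ / η) * Complex.sinh (z * ((ℓ : ℂ) - (x : ℂ))))) :
    (Differentiable ℝ f₁ ∧ Differentiable ℝ (deriv f₁) ∧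
      ∀ x : ℝ, (k : ℂ) * deriv (deriv f₁) x = (s ^ 2 + (d : ℂ) * s) * f₁ x - 1) ∧
    (Differentiable ℝ f₂ ∧ Differentiable ℝ (deriv f₂) ∧
      ∀ x : ℝ, (k : ℂ) * deriv (deriv f₂) x = (s ^ 2 + (d : ℂ) * s) * f₂ x - 1) :=
  uniform_forcing_branches_satisfy_ode_general ℓ k d s z hs hz β₁ β₂ η f₁ f₂ hf₁ hf₂
end

section
/- For every complex number s with s² + d·s ≠ 0, every complex z with k·z² = s² + d·s, and assuming η ≠ 0, the functions f₁, f₂ : ℝ → ℂ defined by f₁(x) = (1/(s² + d·s))·(1 − cosh(z·x) + (β₁/η)·sinh(z·x)) and f₂(x) = (1/(s² + d·s))·(1 − cosh(z·(ℓ − x)) + (β₂/η)·sinh(z·(ℓ − x))) satisfy the boundary and interface conditions of the uniform-forcing problem: f₁(0) = 0, f₂(ℓ) = 0, f₁(𝔭) = f₂(𝔭), and 𝔤·s·f₁(𝔭) = k·(f₂'(𝔭) − f₁'(𝔭)), where f₁' and f₂' denote the derivatives of f₁ and f₂. -/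
set_option maxHeartbeats 2000000


/-- The two branches of the uniform-forcing displacement transfer function satisfy the
boundary and interface conditions of the uniform-forcing problem. -/
theorem uniform_forcing_branches_boundary_interface
    (ℓ k d p g : ℝ) (hℓ : 0 < ℓ) (hk : 0 < k) (hd : 0 < d)
    (hp0 : 0 < p) (hpℓ : p < ℓ) (hg : 0 ≤ g)
    (s z : ℂ) (hs : s ^ 2 + (d : ℂ) * s ≠ 0)
    (hz : (k : ℂ) * z ^ 2 = s ^ 2 + (d : ℂ) * s)
    (β₁ β₂ η : ℂ)
    (hβ₁ : β₁ = 2 * (k : ℂ) * z * Complex.sinh (z * (ℓ : ℂ) / 2) ^ 2 +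
      2 * (g : ℂ) * s * Complex.sinh (z * ((ℓ : ℂ) - (p : ℂ))) *
        Complex.sinh (z * (p : ℂ) / 2) ^ 2)
    (hβ₂ : β₂ = 2 * (k : ℂ) * z * Complex.sinh (z * (ℓ : ℂ) / 2) ^ 2 +
      2 * (g : ℂ) * s * Complex.sinh (z * (p : ℂ)) *
        Complex.sinh (z * ((ℓ : ℂ) - (p : ℂ)) / 2) ^ 2)
    (hη : η = (k : ℂ) * z * Complex.sinh (z * (ℓ : ℂ)) +
      (g : ℂ) * s * Complex.sinh (z * (p : ℂ)) * Complex.sinh (z * ((ℓ : ℂ) - (p : ℂ))))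
    (hη0 : η ≠ 0)
    (f₁ f₂ : ℝ → ℂ)
    (hf₁ : f₁ = fun x : ℝ => (1 / (s ^ 2 + (d : ℂ) * s)) *
      (1 - Complex.cosh (z * (x : ℂ)) + (β₁ / η) * Complex.sinh (z * (x : ℂ))))
    (hf₂ : f₂ = fun x : ℝ => (1 / (s ^ 2 + (d : ℂ) * s)) *
      (1 - Complex.cosh (z * ((ℓ : ℂ) - (x : ℂ))) +
        (β₂ / η) * Complex.sinh (z * ((ℓ : ℂ) - (x : ℂ))))) :
    f₁ 0 = 0 ∧ f₂ ℓ = 0 ∧ f₁ p = f₂ p ∧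
      (g : ℂ) * s * f₁ p = (k : ℂ) * (deriv f₂ p - deriv f₁ p) := by
  -- half-angle decompositions
  have S1 : Complex.sinh (z * (p : ℂ)) =
      2 * Complex.sinh (z * (p : ℂ) / 2) * Complex.cosh (z * (p : ℂ) / 2) := by
    have h := Complex.sinh_two_mul (z * (p : ℂ) / 2)
    rw [show 2 * (z * (p : ℂ) / 2) = z * (p : ℂ) by ring] at h; exact h
  have C1 : Complex.cosh (z * (p : ℂ)) =
      Complex.cosh (z * (p : ℂ) / 2) ^ 2 + Complex.sinh (z * (p : ℂ) / 2) ^ 2 := by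
    have h := Complex.cosh_two_mul (z * (p : ℂ) / 2)
    rw [show 2 * (z * (p : ℂ) / 2) = z * (p : ℂ) by ring] at h; exact h
  have S2 : Complex.sinh (z * ((ℓ : ℂ) - (p : ℂ))) =
      2 * Complex.sinh (z * ((ℓ : ℂ) - (p : ℂ)) / 2) *
        Complex.cosh (z * ((ℓ : ℂ) - (p : ℂ)) / 2) := by
    have h := Complex.sinh_two_mul (z * ((ℓ : ℂ) - (p : ℂ)) / 2)
    rw [show 2 * (z * ((ℓ : ℂ) - (p : ℂ)) / 2) = z * ((ℓ : ℂ) - (p : ℂ)) by ring] at h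
    exact h
  have C2 : Complex.cosh (z * ((ℓ : ℂ) - (p : ℂ))) =
      Complex.cosh (z * ((ℓ : ℂ) - (p : ℂ)) / 2) ^ 2 +
        Complex.sinh (z * ((ℓ : ℂ) - (p : ℂ)) / 2) ^ 2 := by
    have h := Complex.cosh_two_mul (z * ((ℓ : ℂ) - (p : ℂ)) / 2)
    rw [show 2 * (z * ((ℓ : ℂ) - (p : ℂ)) / 2) = z * ((ℓ : ℂ) - (p : ℂ)) by ring] at h
    exact h
  have SL2 : Complex.sinh (z * (ℓ : ℂ) / 2) =
      Complex.sinh (z * (p : ℂ) / 2) * Complex.cosh (z * ((ℓ : ℂ) - (p : ℂ)) / 2) +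
        Complex.cosh (z * (p : ℂ) / 2) * Complex.sinh (z * ((ℓ : ℂ) - (p : ℂ)) / 2) := by
    have h := Complex.sinh_add (z * (p : ℂ) / 2) (z * ((ℓ : ℂ) - (p : ℂ)) / 2)
    rw [show z * (p : ℂ) / 2 + z * ((ℓ : ℂ) - (p : ℂ)) / 2 = z * (ℓ : ℂ) / 2 by ring] at h
    exact h
  have CL2 : Complex.cosh (z * (ℓ : ℂ) / 2) =
      Complex.cosh (z * (p : ℂ) / 2) * Complex.cosh (z * ((ℓ : ℂ) - (p : ℂ)) / 2) +
        Complex.sinh (z * (p : ℂ) / 2) * Complex.sinh (z * ((ℓ : ℂ) - (p : ℂ)) / 2) := by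
    have h := Complex.cosh_add (z * (p : ℂ) / 2) (z * ((ℓ : ℂ) - (p : ℂ)) / 2)
    rw [show z * (p : ℂ) / 2 + z * ((ℓ : ℂ) - (p : ℂ)) / 2 = z * (ℓ : ℂ) / 2 by ring] at h
    exact h
  have SL : Complex.sinh (z * (ℓ : ℂ)) =
      2 * (Complex.sinh (z * (p : ℂ) / 2) * Complex.cosh (z * ((ℓ : ℂ) - (p : ℂ)) / 2) +
          Complex.cosh (z * (p : ℂ) / 2) * Complex.sinh (z * ((ℓ : ℂ) - (p : ℂ)) / 2)) *
        (Complex.cosh (z * (p : ℂ) / 2) * Complex.cosh (z * ((ℓ : ℂ) - (p : ℂ)) / 2) +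
          Complex.sinh (z * (p : ℂ) / 2) * Complex.sinh (z * ((ℓ : ℂ) - (p : ℂ)) / 2)) := by
    have h := Complex.sinh_two_mul (z * (ℓ : ℂ) / 2)
    rw [show 2 * (z * (ℓ : ℂ) / 2) = z * (ℓ : ℂ) by ring, SL2, CL2] at h; exact h
  have h1 := Complex.cosh_sq_sub_sinh_sq (z * (p : ℂ) / 2)
  have h2 := Complex.cosh_sq_sub_sinh_sq (z * ((ℓ : ℂ) - (p : ℂ)) / 2)
  set a := Complex.sinh (z * (p : ℂ) / 2) with ha
  set ca := Complex.cosh (z * (p : ℂ) / 2) with hca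
  set b := Complex.sinh (z * ((ℓ : ℂ) - (p : ℂ)) / 2) with hb
  set cb := Complex.cosh (z * ((ℓ : ℂ) - (p : ℂ)) / 2) with hcb
  -- key algebraic identities
  have key1 : (1 - Complex.cosh (z * (p : ℂ))) * η + β₁ * Complex.sinh (z * (p : ℂ)) =
      (1 - Complex.cosh (z * ((ℓ : ℂ) - (p : ℂ)))) * η +
        β₂ * Complex.sinh (z * ((ℓ : ℂ) - (p : ℂ))) := by
    rw [hβ₁, hβ₂, hη, S1, C1, S2, C2, SL2, SL]
    linear_combination
      (2 * (k : ℂ) * z * (-(b * cb) + b * cb ^ 3 - b ^ 3 * cb - ca ^ 2 * b * cb -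
          a * ca * cb ^ 2 + a * ca * b ^ 2 + a ^ 2 * b * cb) -
        4 * (g : ℂ) * s * a * ca * b * cb) * h1 +
      (2 * (k : ℂ) * z * (b * cb + a * ca * cb ^ 2 - a * ca * b ^ 2) +
        4 * (g : ℂ) * s * a * ca * b * cb) * h2
  have key2 : (g : ℂ) * s * ((1 - Complex.cosh (z * (p : ℂ))) * η +
        β₁ * Complex.sinh (z * (p : ℂ))) =
      (k : ℂ) * z * ((Complex.sinh (z * ((ℓ : ℂ) - (p : ℂ))) * η -
          β₂ * Complex.cosh (z * ((ℓ : ℂ) - (p : ℂ)))) -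
        (-(Complex.sinh (z * (p : ℂ))) * η + β₁ * Complex.cosh (z * (p : ℂ)))) := by
    rw [hβ₁, hβ₂, hη, S1, C1, S2, C2, SL2, SL]
    linear_combination
      (2 * (k : ℂ) ^ 2 * z ^ 2 * (b ^ 2 - b ^ 2 * cb ^ 2 + b ^ 4 + ca ^ 2 * b ^ 2 -
          a ^ 2 * cb ^ 2) +
        2 * (k : ℂ) * (g : ℂ) * s * z * (-(ca ^ 2 * b * cb) - a * ca * cb ^ 2 +
          a * ca * b ^ 2 - a ^ 2 * b * cb) -
        4 * (g : ℂ) ^ 2 * s ^ 2 * a * ca * b * cb) * h1 +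
      (2 * (k : ℂ) ^ 2 * z ^ 2 * (-(b ^ 2) + a ^ 2 * cb ^ 2 - a ^ 2 * b ^ 2) -
        4 * (k : ℂ) * (g : ℂ) * s * z * a * ca * b ^ 2) * h2
  -- derivatives
  have hzw : HasDerivAt (fun w : ℂ => z * w) z (p : ℂ) := by
    simpa using (hasDerivAt_id (p : ℂ)).const_mul z
  have hzw2 : HasDerivAt (fun w : ℂ => z * ((ℓ : ℂ) - w)) (-z) (p : ℂ) := by
    have h := (((hasDerivAt_id (p : ℂ)).const_sub (ℓ : ℂ)).const_mul z)
    simpa using h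
  have hcosh1 : HasDerivAt (fun w : ℂ => Complex.cosh (z * w))
      (Complex.sinh (z * (p : ℂ)) * z) (p : ℂ) :=
    (Complex.hasDerivAt_cosh _).comp _ hzw
  have hsinh1 : HasDerivAt (fun w : ℂ => Complex.sinh (z * w))
      (Complex.cosh (z * (p : ℂ)) * z) (p : ℂ) :=
    (Complex.hasDerivAt_sinh _).comp _ hzw
  have hcosh2 : HasDerivAt (fun w : ℂ => Complex.cosh (z * ((ℓ : ℂ) - w)))
      (Complex.sinh (z * ((ℓ : ℂ) - (p : ℂ))) * -z) (p : ℂ) :=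
    (Complex.hasDerivAt_cosh _).comp _ hzw2
  have hsinh2 : HasDerivAt (fun w : ℂ => Complex.sinh (z * ((ℓ : ℂ) - w)))
      (Complex.cosh (z * ((ℓ : ℂ) - (p : ℂ))) * -z) (p : ℂ) :=
    (Complex.hasDerivAt_sinh _).comp _ hzw2
  have H1 : HasDerivAt (fun w : ℂ => (1 / (s ^ 2 + (d : ℂ) * s)) *
      (1 - Complex.cosh (z * w) + (β₁ / η) * Complex.sinh (z * w)))
      ((1 / (s ^ 2 + (d : ℂ) * s)) * (0 - Complex.sinh (z * (p : ℂ)) * z +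
        (β₁ / η) * (Complex.cosh (z * (p : ℂ)) * z))) (p : ℂ) :=
    (((hasDerivAt_const _ (1 : ℂ)).sub hcosh1).add (hsinh1.const_mul (β₁ / η))).const_mul _
  have H2 : HasDerivAt (fun w : ℂ => (1 / (s ^ 2 + (d : ℂ) * s)) *
      (1 - Complex.cosh (z * ((ℓ : ℂ) - w)) + (β₂ / η) * Complex.sinh (z * ((ℓ : ℂ) - w))))
      ((1 / (s ^ 2 + (d : ℂ) * s)) * (0 - Complex.sinh (z * ((ℓ : ℂ) - (p : ℂ))) * -z +
        (β₂ / η) * (Complex.cosh (z * ((ℓ : ℂ) - (p : ℂ))) * -z))) (p : ℂ) :=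
    (((hasDerivAt_const _ (1 : ℂ)).sub hcosh2).add (hsinh2.const_mul (β₂ / η))).const_mul _
  have hd1 : deriv f₁ p = (1 / (s ^ 2 + (d : ℂ) * s)) * (0 - Complex.sinh (z * (p : ℂ)) * z +
      (β₁ / η) * (Complex.cosh (z * (p : ℂ)) * z)) := by
    rw [hf₁]; exact H1.comp_ofReal.deriv
  have hd2 : deriv f₂ p = (1 / (s ^ 2 + (d : ℂ) * s)) *
      (0 - Complex.sinh (z * ((ℓ : ℂ) - (p : ℂ))) * -z +
        (β₂ / η) * (Complex.cosh (z * ((ℓ : ℂ) - (p : ℂ))) * -z)) := by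
    rw [hf₂]; exact H2.comp_ofReal.deriv
  refine ⟨?_, ?_, ?_, ?_⟩
  · simp [hf₁]
  · simp [hf₂]
  · rw [hf₁, hf₂]
    simp only
    field_simp
    first
      | linear_combination key1
      | linear_combination -key1
      | linear_combination (s ^ 2 + (d : ℂ) * s) * key1
      | linear_combination -((s ^ 2 + (d : ℂ) * s)) * key1
      | linear_combination η * key1
      | linear_combination -η * key1
      | (rw [key1]; ring)
  · rw [hd1, hd2, hf₁]
    simp only
    field_simp
    first
      | linear_combination key2
      | linear_combination -key2
      | linear_combination (s ^ 2 + (d : ℂ) * s) * key2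
      | linear_combination -((s ^ 2 + (d : ℂ) * s)) * key2
      | linear_combination η * key2
      | linear_combination -η * key2
      | linear_combination z * key2
      | linear_combination -z * key2
      | (rw [key2]; ring)
end

section
/- For every complex number s with s² + d·s ≠ 0 and every complex z ≠ 0 with k·z² = s² + d·s such that η ≠ 0, the average over [0, ℓ] of the uniform-forcing displacement transfer function equals the output transfer function of Theorem 3.1: (1/ℓ)·( ∫₀^𝔭 (1/(s² + d·s))·(1 − cosh(z·x) + (β₁/η)·sinh(z·x)) dx + ∫_𝔭^ℓ (1/(s² + d·s))·(1 − cosh(z·(ℓ − x)) + (β₂/η)·sinh(z·(ℓ − x))) dx ) = (1/(s² + d·s))·(1 − γ/(z·ℓ·η)). -/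
open Complex intervalIntegral

lemma deriv1 (C B z : ℂ) (hz : z ≠ 0) (w : ℂ) :
    HasDerivAt (fun w => C * (w - Complex.sinh (z*w)/z + B * Complex.cosh (z*w)/z))
      (C * (1 - Complex.cosh (z*w) + B * Complex.sinh (z*w))) w := by
  have h1 : HasDerivAt (fun w : ℂ => z*w) z w := by simpa using (hasDerivAt_id w).const_mul z
  have hs : HasDerivAt (fun w : ℂ => Complex.sinh (z*w)) (Complex.cosh (z*w) * z) w :=
    (Complex.hasDerivAt_sinh (z*w)).comp w h1
  have hc : HasDerivAt (fun w : ℂ => Complex.cosh (z*w)) (Complex.sinh (z*w) * z) w :=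
    (Complex.hasDerivAt_cosh (z*w)).comp w h1
  have := (((hasDerivAt_id w).sub (hs.div_const z)).add
    ((hc.mul_const (1/z)).const_mul B)).const_mul C
  refine HasDerivAt.congr_of_eventuallyEq (this.congr_deriv ?_) (Filter.Eventually.of_forall fun x => ?_)
  · field_simp
  · simp only [Pi.add_apply, Pi.sub_apply, id]
    ring

lemma deriv2 (C B z L : ℂ) (hz : z ≠ 0) (w : ℂ) :
    HasDerivAt (fun w => C * (w + Complex.sinh (z*(L-w))/z - B * Complex.cosh (z*(L-w))/z))
      (C * (1 - Complex.cosh (z*(L-w)) + B * Complex.sinh (z*(L-w)))) w := by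
  have h1 : HasDerivAt (fun w : ℂ => z*(L-w)) (-z) w := by
    simpa using ((hasDerivAt_id w).const_sub L).const_mul z
  have hs : HasDerivAt (fun w : ℂ => Complex.sinh (z*(L-w))) (Complex.cosh (z*(L-w)) * (-z)) w :=
    (Complex.hasDerivAt_sinh _).comp w h1
  have hc : HasDerivAt (fun w : ℂ => Complex.cosh (z*(L-w))) (Complex.sinh (z*(L-w)) * (-z)) w :=
    (Complex.hasDerivAt_cosh _).comp w h1
  have := (((hasDerivAt_id w).add (hs.div_const z)).sub
    ((hc.mul_const (1/z)).const_mul B)).const_mul C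
  refine HasDerivAt.congr_of_eventuallyEq (this.congr_deriv ?_) (Filter.Eventually.of_forall fun x => ?_)
  · field_simp
    ring
  · simp only [Pi.add_apply, Pi.sub_apply, id]
    ring

lemma int1 (C B z : ℂ) (hz : z ≠ 0) (a b : ℝ) :
    (∫ x in a..b, C * (1 - Complex.cosh (z*(x:ℂ)) + B * Complex.sinh (z*(x:ℂ)))) =
      (C * ((b:ℂ) - Complex.sinh (z*b)/z + B * Complex.cosh (z*b)/z)) -
      (C * ((a:ℂ) - Complex.sinh (z*a)/z + B * Complex.cosh (z*a)/z)) := by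
  apply intervalIntegral.integral_eq_sub_of_hasDerivAt
  · intro x hx
    exact (deriv1 C B z hz x).comp_ofReal
  · apply Continuous.intervalIntegrable
    continuity

lemma int2 (C B z L : ℂ) (hz : z ≠ 0) (a b : ℝ) :
    (∫ x in a..b, C * (1 - Complex.cosh (z*(L-(x:ℂ))) + B * Complex.sinh (z*(L-(x:ℂ))))) =
      (C * ((b:ℂ) + Complex.sinh (z*(L-b))/z - B * Complex.cosh (z*(L-b))/z)) -
      (C * ((a:ℂ) + Complex.sinh (z*(L-a))/z - B * Complex.cosh (z*(L-a))/z)) := by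
  apply intervalIntegral.integral_eq_sub_of_hasDerivAt
  · intro x hx
    exact (deriv2 C B z L hz x).comp_ofReal
  · apply Continuous.intervalIntegrable
    continuity

set_option maxHeartbeats 1000000 in
lemma core (A G u v : ℂ) :
    (A * Complex.sinh (2*u+2*v) + G * Complex.sinh (2*u) * Complex.sinh (2*v)) *
      (Complex.sinh (2*u) + Complex.sinh (2*v))
    - (2*A*Complex.sinh (u+v)^2 + 2*G*Complex.sinh (2*v)*Complex.sinh u^2) *
      (Complex.cosh (2*u) - 1)
    - (2*A*Complex.sinh (u+v)^2 + 2*G*Complex.sinh (2*u)*Complex.sinh v^2) *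
      (Complex.cosh (2*v) - 1)
    = 4*A*Complex.sinh (u+v)^2 + 8*G*Complex.sinh (u+v)*Complex.sinh u*Complex.sinh v := by
  set a := Complex.exp u with ha
  set b := Complex.exp v with hb
  set c := Complex.exp (-u) with hc
  set d := Complex.exp (-v) with hd
  have h1 : a * c = 1 := by rw [ha, hc, ← Complex.exp_add]; simp
  have h2 : b * d = 1 := by rw [hb, hd, ← Complex.exp_add]; simp
  have e1 : Complex.exp (2*u+2*v) = a^2*b^2 := by
    rw [show 2*u+2*v = (u+v)+(u+v) by ring, Complex.exp_add, Complex.exp_add, ha, hb]; ring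
  have e2 : Complex.exp (-(2*u+2*v)) = c^2*d^2 := by
    rw [show -(2*u+2*v) = (-u + -v)+(-u + -v) by ring, Complex.exp_add, Complex.exp_add, hc, hd]; ring
  have e3 : Complex.exp (2*u) = a^2 := by
    rw [show 2*u = u+u by ring, Complex.exp_add, ha]; ring
  have e4 : Complex.exp (-(2*u)) = c^2 := by
    rw [show -(2*u) = -u + -u by ring, Complex.exp_add, hc]; ring
  have e5 : Complex.exp (2*v) = b^2 := by
    rw [show 2*v = v+v by ring, Complex.exp_add, hb]; ring
  have e6 : Complex.exp (-(2*v)) = d^2 := by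
    rw [show -(2*v) = -v + -v by ring, Complex.exp_add, hd]; ring
  have e7 : Complex.exp (u+v) = a*b := by rw [Complex.exp_add, ha, hb]
  have e8 : Complex.exp (-(u+v)) = c*d := by
    rw [show -(u+v) = -u + -v by ring, Complex.exp_add, hc, hd]
  simp only [Complex.sinh, Complex.cosh, e1, e2, e3, e4, e5, e6, e7, e8]
  linear_combination ((-1:ℂ)/2*d^2*A + (-1:ℂ)/4*c^2*d^2*G + (1:ℂ)/2*b*d^3*A + (1:ℂ)/2*b*c^2*d*A + (-1:ℂ)/2*b^2*A + (1:ℂ)/4*b^2*c^2*G + (1:ℂ)/2*b^3*d*A + (1:ℂ)/2*a*c*d^2*G + (-1:ℂ)/2*a*c*d^2*A + (-1:ℂ)/2*a*b^2*c*G + (-1:ℂ)/2*a*b^2*c*A + (-1:ℂ)/4*a^2*d^2*G + (1:ℂ)/2*a^2*b*d*A + (1:ℂ)/4*a^2*b^2*G) * h1 + ((1:ℂ)/2*d^2*A + (-1:ℂ)/4*c^2*d^2*G + (1:ℂ)/2*b*c^2*d*G + (-1:ℂ)/2*b*c^2*d*A + (1:ℂ)/2*b^2*A + (-1:ℂ)/4*b^2*c^2*G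 + (1:ℂ)/4*a^2*d^2*G + (-1:ℂ)/2*a^2*b*d*G + (-1:ℂ)/2*a^2*b*d*A + (1:ℂ)/4*a^2*b^2*G) * h2

set_option maxHeartbeats 1000000 in
/-- The average over `[0, ℓ]` of the uniform-forcing displacement transfer function
equals the uniform-forcing output transfer function `H(s) = (1/(s²+ds))(1 - γ/(zℓη))`. -/
theorem uniform_forcing_average_displacement_eq_output
    (ℓ k d p g : ℝ) (hℓ : 0 < ℓ) (hk : 0 < k) (hd : 0 < d)
    (hp0 : 0 < p) (hpℓ : p < ℓ) (hg : 0 ≤ g)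
    (s z : ℂ) (hs : s ^ 2 + (d : ℂ) * s ≠ 0) (hz0 : z ≠ 0)
    (hz : (k : ℂ) * z ^ 2 = s ^ 2 + (d : ℂ) * s)
    (β₁ β₂ γ η : ℂ)
    (hβ₁ : β₁ = 2 * (k : ℂ) * z * Complex.sinh (z * (ℓ : ℂ) / 2) ^ 2 +
      2 * (g : ℂ) * s * Complex.sinh (z * ((ℓ : ℂ) - (p : ℂ))) *
        Complex.sinh (z * (p : ℂ) / 2) ^ 2)
    (hβ₂ : β₂ = 2 * (k : ℂ) * z * Complex.sinh (z * (ℓ : ℂ) / 2) ^ 2 +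
      2 * (g : ℂ) * s * Complex.sinh (z * (p : ℂ)) *
        Complex.sinh (z * ((ℓ : ℂ) - (p : ℂ)) / 2) ^ 2)
    (hγ : γ = 4 * (k : ℂ) * z * Complex.sinh (z * (ℓ : ℂ) / 2) ^ 2 +
      8 * (g : ℂ) * s * Complex.sinh (z * (ℓ : ℂ) / 2) * Complex.sinh (z * (p : ℂ) / 2) *
        Complex.sinh (z * ((ℓ : ℂ) - (p : ℂ)) / 2))
    (hη : η = (k : ℂ) * z * Complex.sinh (z * (ℓ : ℂ)) +
      (g : ℂ) * s * Complex.sinh (z * (p : ℂ)) * Complex.sinh (z * ((ℓ : ℂ) - (p : ℂ))))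
    (hη0 : η ≠ 0) :
    (1 / (ℓ : ℂ)) *
      ((∫ x in (0 : ℝ)..p, (1 / (s ^ 2 + (d : ℂ) * s)) *
          (1 - Complex.cosh (z * (x : ℂ)) + (β₁ / η) * Complex.sinh (z * (x : ℂ)))) +
        (∫ x in p..ℓ, (1 / (s ^ 2 + (d : ℂ) * s)) *
          (1 - Complex.cosh (z * ((ℓ : ℂ) - (x : ℂ))) +
            (β₂ / η) * Complex.sinh (z * ((ℓ : ℂ) - (x : ℂ)))))) =
      (1 / (s ^ 2 + (d : ℂ) * s)) * (1 - γ / (z * (ℓ : ℂ) * η)) := by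
  have hL : (ℓ : ℂ) ≠ 0 := by exact_mod_cast hℓ.ne'
  rw [int1 (1 / (s ^ 2 + (d : ℂ) * s)) (β₁/η) z hz0 0 p,
      int2 (1 / (s ^ 2 + (d : ℂ) * s)) (β₂/η) z (ℓ:ℂ) hz0 p ℓ]
  have hcore := core ((k:ℂ)*z) ((g:ℂ)*s) (z*(p:ℂ)/2) (z*((ℓ:ℂ)-(p:ℂ))/2)
  rw [show 2*(z*(p:ℂ)/2)+2*(z*((ℓ:ℂ)-(p:ℂ))/2) = z*(ℓ:ℂ) by ring,
      show z*(p:ℂ)/2 + z*((ℓ:ℂ)-(p:ℂ))/2 = z*(ℓ:ℂ)/2 by ring,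
      show 2*(z*(p:ℂ)/2) = z*(p:ℂ) by ring,
      show 2*(z*((ℓ:ℂ)-(p:ℂ))/2) = z*((ℓ:ℂ)-(p:ℂ)) by ring] at hcore
  have hcore' : η * (Complex.sinh (z*(p:ℂ)) + Complex.sinh (z*((ℓ:ℂ)-(p:ℂ))))
      - β₁*(Complex.cosh (z*(p:ℂ)) - 1) - β₂*(Complex.cosh (z*((ℓ:ℂ)-(p:ℂ))) - 1) = γ := by
    rw [hβ₁, hβ₂, hγ, hη]; linear_combination hcore
  simp only [Complex.ofReal_zero, mul_zero, sub_self, Complex.sinh_zero, Complex.cosh_zero]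
  set A := s ^ 2 + (d : ℂ) * s with hA
  clear_value A
  have hD1 : A * (z * (η * z)) * (A * (η * z)) ≠ 0 := by
    apply mul_ne_zero (mul_ne_zero hs (mul_ne_zero hz0 (mul_ne_zero hη0 hz0)))
    exact mul_ne_zero hs (mul_ne_zero hη0 hz0)
  have hD2 : A * (η * z) * (A * (z * (η * z))) ≠ 0 := by
    apply mul_ne_zero (mul_ne_zero hs (mul_ne_zero hη0 hz0))
    exact mul_ne_zero hs (mul_ne_zero hz0 (mul_ne_zero hη0 hz0))
  field_simp
  rw [mul_comm (p:ℂ) z]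
  linear_combination (-1) * hcore'
end

section
/- The uniform-forcing output transfer function H(s) = (1/(s² + d·s))·(1 − γ(s)/(z(s)·ℓ·η(s))) has a removable singularity at s = 0 with limit value ℓ²/(12·k): the function s ↦ (1/(s² + d·s))·(1 − γ(s)/(z(s)·ℓ·η(s))) tends to ℓ²/(12·k) as s → 0 within the set {s ∈ ℂ : s ≠ 0 and s ≠ −d}. -/
open Complex Filter Topology

lemma aux_S3 : Tendsto (fun z : ℂ => (Complex.sinh z - z) / z ^ 3) (𝓝[≠] (0:ℂ)) (𝓝 (1/6)) := by
  rw [← tendsto_sub_nhds_zero_iff]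
  apply squeeze_zero_norm' (a := fun z : ℂ => 5/96 * ‖z‖)
  · have h1 : ∀ᶠ z : ℂ in 𝓝[≠] (0:ℂ), ‖z‖ ≤ 1 := by
      apply eventually_nhdsWithin_of_eventually_nhds
      filter_upwards [Metric.closedBall_mem_nhds (0:ℂ) one_pos] with z hz
      simpa [mem_closedBall_zero_iff] using hz
    filter_upwards [h1, self_mem_nhdsWithin] with z hz1 hz0
    have hz0 : z ≠ 0 := hz0
    have hb : ‖Complex.sinh z - z - z^3/6‖ ≤ 5/96 * ‖z‖^4 := by
      have e1 := Complex.exp_bound (x := z) (by exact hz1) (by norm_num : 0 < 4)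
      have e2 := Complex.exp_bound (x := -z)
        (by rw [norm_neg]; exact hz1) (by norm_num : 0 < 4)
      have hsum : ∀ y : ℂ, ∑ m ∈ Finset.range 4, y ^ m / (Nat.factorial m) = 1 + y + y^2/2 + y^3/6 := by
        intro y
        rw [Finset.sum_range_succ, Finset.sum_range_succ, Finset.sum_range_succ,
          Finset.sum_range_succ, Finset.sum_range_zero]
        norm_num [Nat.factorial]
      rw [hsum] at e1 e2
      norm_num [Nat.factorial] at e1 e2
      have hA : ‖Complex.exp z - (1 + z + z^2/2 + z^3/6)‖ ≤ ‖z‖^4 * (5/96) := by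
        simpa using e1
      have hB : ‖Complex.exp (-z) - (1 + -z + z^2/2 + (-z)^3/6)‖ ≤ ‖z‖^4 * (5/96) := by
        simpa using e2
      have key : Complex.sinh z - z - z^3/6
          = ((Complex.exp z - (1 + z + z^2/2 + z^3/6))
             - (Complex.exp (-z) - (1 + -z + z^2/2 + (-z)^3/6)))/2 := by
        unfold Complex.sinh
        ring
      rw [key, norm_div]
      have h2 : ‖(2:ℂ)‖ = 2 := by norm_num
      rw [h2]
      have hAB := norm_sub_le (Complex.exp z - (1 + z + z^2/2 + z^3/6))
        (Complex.exp (-z) - (1 + -z + z^2/2 + (-z)^3/6))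
      linarith
    have hzp : (0:ℝ) < ‖z‖ := norm_pos_iff.mpr hz0
    have hz3 : (0:ℝ) < ‖z‖^3 := by positivity
    have heq : (Complex.sinh z - z)/z^3 - 1/6 = (Complex.sinh z - z - z^3/6)/z^3 := by
      field_simp
    rw [heq, norm_div, norm_pow, div_le_iff₀ hz3]
    have hznn : (0:ℝ) ≤ ‖z‖ := norm_nonneg z
    nlinarith [hb]
  · have hc : Tendsto (fun z : ℂ => 5/96 * ‖z‖) (𝓝 0) (𝓝 (5/96 * ‖(0:ℂ)‖)) :=
      (continuous_const.mul continuous_norm).tendsto 0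
    simp only [norm_zero, mul_zero] at hc
    exact hc.mono_left nhdsWithin_le_nhds

lemma aux_S1 : Tendsto (fun z : ℂ => Complex.sinh z / z) (𝓝[≠] (0:ℂ)) (𝓝 1) := by
  have h := Complex.hasDerivAt_sinh 0
  rw [hasDerivAt_iff_tendsto_slope] at h
  rw [Complex.cosh_zero] at h
  refine h.congr fun z => ?_
  simp [slope_def_field, Complex.sinh_zero]


set_option maxHeartbeats 4000000 in
/-- The uniform-forcing output transfer function has a removable singularity at `s = 0`
with limit value `ℓ² / (12 k)`. -/
theorem uniform_forcing_output_limit_at_zero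
    (ℓ k d p g : ℝ) (hℓ : 0 < ℓ) (hk : 0 < k) (hd : 0 < d)
    (hp0 : 0 < p) (hpℓ : p < ℓ) (hg : 0 ≤ g) :
    Filter.Tendsto
      (fun s : ℂ =>
        (1 / (s ^ 2 + (d : ℂ) * s)) *
          (1 -
            (4 * (k : ℂ) * ((s ^ 2 + (d : ℂ) * s) / (k : ℂ)) ^ (1 / 2 : ℂ) *
                Complex.sinh (((s ^ 2 + (d : ℂ) * s) / (k : ℂ)) ^ (1 / 2 : ℂ) * (ℓ : ℂ) / 2) ^ 2 +
              8 * (g : ℂ) * s *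
                Complex.sinh (((s ^ 2 + (d : ℂ) * s) / (k : ℂ)) ^ (1 / 2 : ℂ) * (ℓ : ℂ) / 2) *
                Complex.sinh (((s ^ 2 + (d : ℂ) * s) / (k : ℂ)) ^ (1 / 2 : ℂ) * (p : ℂ) / 2) *
                Complex.sinh
                  (((s ^ 2 + (d : ℂ) * s) / (k : ℂ)) ^ (1 / 2 : ℂ) * ((ℓ : ℂ) - (p : ℂ)) / 2)) /
            (((s ^ 2 + (d : ℂ) * s) / (k : ℂ)) ^ (1 / 2 : ℂ) * (ℓ : ℂ) *
              ((k : ℂ) * ((s ^ 2 + (d : ℂ) * s) / (k : ℂ)) ^ (1 / 2 : ℂ) *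
                  Complex.sinh (((s ^ 2 + (d : ℂ) * s) / (k : ℂ)) ^ (1 / 2 : ℂ) * (ℓ : ℂ)) +
                (g : ℂ) * s *
                  Complex.sinh (((s ^ 2 + (d : ℂ) * s) / (k : ℂ)) ^ (1 / 2 : ℂ) * (p : ℂ)) *
                  Complex.sinh
                    (((s ^ 2 + (d : ℂ) * s) / (k : ℂ)) ^ (1 / 2 : ℂ) * ((ℓ : ℂ) - (p : ℂ)))))))
      (nhdsWithin 0 {s : ℂ | s ≠ 0 ∧ s ≠ -(d : ℂ)})
      (nhds ((ℓ : ℂ) ^ 2 / (12 * (k : ℂ)))) := by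
  have hkc : (k:ℂ) ≠ 0 := Complex.ofReal_ne_zero.mpr hk.ne'
  have hlc : (ℓ:ℂ) ≠ 0 := Complex.ofReal_ne_zero.mpr hℓ.ne'
  have hpc : (p:ℂ) ≠ 0 := Complex.ofReal_ne_zero.mpr hp0.ne'
  have hdc : (d:ℂ) ≠ 0 := Complex.ofReal_ne_zero.mpr hd.ne'
  have hqc : (ℓ:ℂ) - (p:ℂ) ≠ 0 := by
    rw [sub_ne_zero]
    exact fun h => hpℓ.ne' (by exact_mod_cast h)
  set w : ℂ → ℂ := fun s => ((s^2 + (d:ℂ)*s)/(k:ℂ)) ^ (1/2 : ℂ) with hw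
  set S : Set ℂ := {s : ℂ | s ≠ 0 ∧ s ≠ -(d:ℂ)} with hSdef
  set F := nhdsWithin (0:ℂ) S with hF
  have hmem : ∀ s ∈ S, s ≠ 0 ∧ s + (d:ℂ) ≠ 0 := by
    intro s hs
    obtain ⟨h1, h2⟩ := hs
    exact ⟨h1, fun h => h2 (eq_neg_of_add_eq_zero_left h)⟩
  have hτ : ∀ s ∈ S, (s^2 + (d:ℂ)*s)/(k:ℂ) ≠ 0 := by
    intro s hs
    obtain ⟨h1, h2⟩ := hmem s hs
    apply div_ne_zero _ hkc
    have he : s^2 + (d:ℂ)*s = s*(s+d) := by ring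
    rw [he]
    exact mul_ne_zero h1 h2
  have hw2 : ∀ s ∈ S, (w s)^2 = (s^2 + (d:ℂ)*s)/(k:ℂ) := by
    intro s hs
    have ht := hτ s hs
    simp only [hw]
    rw [sq, ← Complex.cpow_add _ _ ht]
    have : (1/2 : ℂ) + 1/2 = 1 := by norm_num
    rw [this, Complex.cpow_one]
  have hw0 : ∀ s ∈ S, w s ≠ 0 := by
    intro s hs h
    apply hτ s hs
    rw [← hw2 s hs, h]
    simp
  have hwt0 : Tendsto w F (𝓝 0) := by
    rw [tendsto_zero_iff_norm_tendsto_zero]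
    have hc : Tendsto (fun s : ℂ => Real.sqrt ‖(s^2 + (d:ℂ)*s)/(k:ℂ)‖) F (𝓝 0) := by
      have hcont : Continuous fun s : ℂ => Real.sqrt ‖(s^2 + (d:ℂ)*s)/(k:ℂ)‖ := by fun_prop
      have h0 := hcont.tendsto 0
      have hz : Real.sqrt ‖(((0:ℂ))^2 + (d:ℂ)*0)/(k:ℂ)‖ = 0 := by norm_num
      rw [hz] at h0
      exact h0.mono_left nhdsWithin_le_nhds
    refine hc.congr' ?_
    filter_upwards [self_mem_nhdsWithin] with s hs
    have h2 : ‖w s‖^2 = ‖(s^2 + (d:ℂ)*s)/(k:ℂ)‖ := by rw [← norm_pow, hw2 s hs]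
    rw [← h2, Real.sqrt_sq (norm_nonneg _)]
  have hwne : ∀ᶠ s in F, w s ≠ 0 := by
    filter_upwards [self_mem_nhdsWithin] with s hs using hw0 s hs
  have hmul : ∀ c : ℂ, c ≠ 0 → Tendsto (fun s => w s * c) F (𝓝[≠] (0:ℂ)) := by
    intro c hc
    rw [tendsto_nhdsWithin_iff]
    constructor
    · have h := hwt0.mul_const c
      rw [zero_mul] at h
      exact h
    · filter_upwards [hwne] with s h using mul_ne_zero h hc
  have hmul2 : ∀ c : ℂ, c ≠ 0 → Tendsto (fun s => w s * c / 2) F (𝓝[≠] (0:ℂ)) := by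
    intro c hc
    have h := hmul (c/2) (div_ne_zero hc two_ne_zero)
    exact h.congr fun s => by ring
  have T1l : Tendsto (fun s => Complex.sinh (w s * (ℓ:ℂ)) / (w s * (ℓ:ℂ))) F (𝓝 1) :=
    aux_S1.comp (hmul _ hlc)
  have T1p : Tendsto (fun s => Complex.sinh (w s * (p:ℂ)) / (w s * (p:ℂ))) F (𝓝 1) :=
    aux_S1.comp (hmul _ hpc)
  have T1q : Tendsto (fun s => Complex.sinh (w s * ((ℓ:ℂ) - (p:ℂ))) / (w s * ((ℓ:ℂ) - (p:ℂ)))) F (𝓝 1) :=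
    aux_S1.comp (hmul _ hqc)
  have T1hl : Tendsto (fun s => Complex.sinh (w s * (ℓ:ℂ) / 2) / (w s * (ℓ:ℂ) / 2)) F (𝓝 1) :=
    aux_S1.comp (hmul2 _ hlc)
  have T1hp : Tendsto (fun s => Complex.sinh (w s * (p:ℂ) / 2) / (w s * (p:ℂ) / 2)) F (𝓝 1) :=
    aux_S1.comp (hmul2 _ hpc)
  have T1hq : Tendsto (fun s => Complex.sinh (w s * ((ℓ:ℂ) - (p:ℂ)) / 2) / (w s * ((ℓ:ℂ) - (p:ℂ)) / 2)) F (𝓝 1) :=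
    aux_S1.comp (hmul2 _ hqc)
  have T3l : Tendsto (fun s => (Complex.sinh (w s * (ℓ:ℂ)) - w s * (ℓ:ℂ)) / (w s * (ℓ:ℂ))^3) F (𝓝 (1/6)) :=
    aux_S3.comp (hmul _ hlc)
  have T3hl : Tendsto (fun s => (Complex.sinh (w s * (ℓ:ℂ) / 2) - w s * (ℓ:ℂ) / 2) / (w s * (ℓ:ℂ) / 2)^3) F (𝓝 (1/6)) :=
    aux_S3.comp (hmul2 _ hlc)
  have Tsq : Tendsto (fun s => (w s * (ℓ:ℂ) / 2)^2) F (𝓝 0) := by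
    have h := ((hwt0.mul_const ((ℓ:ℂ))).div_const 2).pow 2
    norm_num at h
    exact h
  have Tsql : Tendsto (fun s => (w s * (ℓ:ℂ))^2) F (𝓝 0) := by
    have h := (hwt0.mul_const ((ℓ:ℂ))).pow 2
    norm_num at h
    exact h
  have Ts : Tendsto (fun s : ℂ => s) F (𝓝 0) := tendsto_id.mono_left nhdsWithin_le_nhds
  have Tkd : Tendsto (fun s : ℂ => (k:ℂ)/(s + (d:ℂ))) F (𝓝 ((k:ℂ)/(d:ℂ))) := by
    have h1 : Tendsto (fun s : ℂ => s + (d:ℂ)) F (𝓝 (d:ℂ)) := by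
      have := Ts.add_const (d:ℂ)
      norm_num at this
      exact this
    exact tendsto_const_nhds.div h1 hdc
  have hinner : Tendsto (fun s =>
      (k:ℂ)*(ℓ:ℂ) * (1 + (w s * (ℓ:ℂ))^2 * ((Complex.sinh (w s * (ℓ:ℂ)) - w s * (ℓ:ℂ)) / (w s * (ℓ:ℂ))^3))
        + (g:ℂ) * s * ((p:ℂ)*((ℓ:ℂ)-(p:ℂ))) * (Complex.sinh (w s * (p:ℂ)) / (w s * (p:ℂ)))
          * (Complex.sinh (w s * ((ℓ:ℂ) - (p:ℂ))) / (w s * ((ℓ:ℂ) - (p:ℂ)))))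
      F (𝓝 ((k:ℂ)*(ℓ:ℂ) * (1 + 0 * (1/6)) + (g:ℂ) * 0 * ((p:ℂ)*((ℓ:ℂ)-(p:ℂ))) * 1 * 1)) :=
    ((tendsto_const_nhds.add (Tsql.mul T3l)).const_mul _).add
      ((((Ts.const_mul (g:ℂ)).mul_const _).mul T1p).mul T1q)
  have hinnerne : ∀ᶠ s in F, ((k:ℂ)*(ℓ:ℂ) * (1 + (w s * (ℓ:ℂ))^2 * ((Complex.sinh (w s * (ℓ:ℂ)) - w s * (ℓ:ℂ)) / (w s * (ℓ:ℂ))^3))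
        + (g:ℂ) * s * ((p:ℂ)*((ℓ:ℂ)-(p:ℂ))) * (Complex.sinh (w s * (p:ℂ)) / (w s * (p:ℂ)))
          * (Complex.sinh (w s * ((ℓ:ℂ) - (p:ℂ))) / (w s * ((ℓ:ℂ) - (p:ℂ))))) ≠ 0 := by
    apply hinner.eventually_ne
    rw [show ((k:ℂ)*(ℓ:ℂ) * (1 + 0 * (1/6)) + (g:ℂ) * 0 * ((p:ℂ)*((ℓ:ℂ)-(p:ℂ))) * 1 * 1) = (k:ℂ)*(ℓ:ℂ) from by ring]
    exact mul_ne_zero hkc hlc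
  have hnum : Tendsto (fun s =>
      (k:ℂ)*(ℓ:ℂ)^4 * ((Complex.sinh (w s * (ℓ:ℂ)) - w s * (ℓ:ℂ)) / (w s * (ℓ:ℂ))^3)
      - (k:ℂ)*(ℓ:ℂ)^4/4 * ((Complex.sinh (w s * (ℓ:ℂ) / 2) - w s * (ℓ:ℂ) / 2) / (w s * (ℓ:ℂ) / 2)^3)
          * (2 + (w s * (ℓ:ℂ) / 2)^2 * ((Complex.sinh (w s * (ℓ:ℂ) / 2) - w s * (ℓ:ℂ) / 2) / (w s * (ℓ:ℂ) / 2)^3))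
      + (g:ℂ) * ((k:ℂ)/(s + (d:ℂ))) * ((ℓ:ℂ)*(p:ℂ)*((ℓ:ℂ)-(p:ℂ))) *
          ((Complex.sinh (w s * (p:ℂ)) / (w s * (p:ℂ))) * (Complex.sinh (w s * ((ℓ:ℂ) - (p:ℂ))) / (w s * ((ℓ:ℂ) - (p:ℂ))))
           - (1 + (w s * (ℓ:ℂ) / 2)^2 * ((Complex.sinh (w s * (ℓ:ℂ) / 2) - w s * (ℓ:ℂ) / 2) / (w s * (ℓ:ℂ) / 2)^3))
             * (Complex.sinh (w s * (p:ℂ) / 2) / (w s * (p:ℂ) / 2))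
             * (Complex.sinh (w s * ((ℓ:ℂ) - (p:ℂ)) / 2) / (w s * ((ℓ:ℂ) - (p:ℂ)) / 2))))
    F (𝓝 ((k:ℂ)*(ℓ:ℂ)^4 * (1/6)
      - (k:ℂ)*(ℓ:ℂ)^4/4 * (1/6) * (2 + 0 * (1/6))
      + (g:ℂ) * ((k:ℂ)/(d:ℂ)) * ((ℓ:ℂ)*(p:ℂ)*((ℓ:ℂ)-(p:ℂ))) * (1*1 - (1 + 0 * (1/6))*1*1))) :=
    ((T3l.const_mul _).sub ((T3hl.const_mul _).mul (tendsto_const_nhds.add (Tsq.mul T3hl)))).add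
      (((Tkd.const_mul _).mul_const _).mul ((T1p.mul T1q).sub
        (((tendsto_const_nhds.add (Tsq.mul T3hl)).mul T1hp).mul T1hq)))
  have hdenne : ((k:ℂ)*(ℓ:ℂ) * ((k:ℂ)*(ℓ:ℂ) * (1 + 0 * (1/6)) + (g:ℂ) * 0 * ((p:ℂ)*((ℓ:ℂ)-(p:ℂ))) * 1 * 1)) ≠ 0 := by
    have he : ((k:ℂ)*(ℓ:ℂ) * ((k:ℂ)*(ℓ:ℂ) * (1 + 0 * (1/6)) + (g:ℂ) * 0 * ((p:ℂ)*((ℓ:ℂ)-(p:ℂ))) * 1 * 1)) = ((k:ℂ)*(ℓ:ℂ))^2 := by ring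
    rw [he]
    exact pow_ne_zero _ (mul_ne_zero hkc hlc)
  have hE := hnum.div (hinner.const_mul ((k:ℂ)*(ℓ:ℂ))) hdenne
  have hval : ((k:ℂ)*(ℓ:ℂ)^4 * (1/6)
      - (k:ℂ)*(ℓ:ℂ)^4/4 * (1/6) * (2 + 0 * (1/6))
      + (g:ℂ) * ((k:ℂ)/(d:ℂ)) * ((ℓ:ℂ)*(p:ℂ)*((ℓ:ℂ)-(p:ℂ))) * (1*1 - (1 + 0 * (1/6))*1*1))
      / ((k:ℂ)*(ℓ:ℂ) * ((k:ℂ)*(ℓ:ℂ) * (1 + 0 * (1/6)) + (g:ℂ) * 0 * ((p:ℂ)*((ℓ:ℂ)-(p:ℂ))) * 1 * 1))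
      = (ℓ:ℂ)^2 / (12 * (k:ℂ)) := by
    field_simp
    ring
  rw [hval] at hE
  refine Tendsto.congr' ?_ hE
  filter_upwards [self_mem_nhdsWithin, hinnerne] with s hs hinne
  simp only [Pi.div_apply]
  obtain ⟨hs0, hsd⟩ := hmem s hs
  have hW0 := hw0 s hs
  have hW2 := hw2 s hs
  simp only [hw] at hW0 hW2 hinne ⊢
  set W := ((s^2 + (d:ℂ)*s)/(k:ℂ)) ^ (1/2 : ℂ) with hWdef
  have hkW : (k:ℂ)*W^2 = s^2 + (d:ℂ)*s := by
    rw [hW2]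
    field_simp
  have hfrac : (k:ℂ)/(s+(d:ℂ)) = s/W^2 := by
    rw [div_eq_div_iff hsd (pow_ne_zero 2 hW0), hkW]
    ring
  have hη : (k:ℂ)*W*Complex.sinh (W*(ℓ:ℂ)) + (g:ℂ)*s*Complex.sinh (W*(p:ℂ))*Complex.sinh (W*((ℓ:ℂ)-(p:ℂ))) ≠ 0 := by
    have hexp : (k:ℂ)*W*Complex.sinh (W*(ℓ:ℂ)) + (g:ℂ)*s*Complex.sinh (W*(p:ℂ))*Complex.sinh (W*((ℓ:ℂ)-(p:ℂ)))
        = W^2 * ((k:ℂ)*(ℓ:ℂ) * (1 + (W * (ℓ:ℂ))^2 * ((Complex.sinh (W * (ℓ:ℂ)) - W * (ℓ:ℂ)) / (W * (ℓ:ℂ))^3))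
          + (g:ℂ) * s * ((p:ℂ)*((ℓ:ℂ)-(p:ℂ))) * (Complex.sinh (W*(p:ℂ)) / (W*(p:ℂ)))
            * (Complex.sinh (W*((ℓ:ℂ)-(p:ℂ))) / (W*((ℓ:ℂ)-(p:ℂ))))) := by
      field_simp [hW0, hlc, hpc, hqc]
      ring
    rw [hexp]
    exact mul_ne_zero (pow_ne_zero 2 hW0) hinne
  rw [hfrac, ← hkW]
  revert hqc hinne hη
  generalize (ℓ:ℂ) - (p:ℂ) = Q
  intro hqc hinne hη
  have habc : ∀ a b c : ℂ, b ≠ 0 → c ≠ 0 → 1/b * (1 - a/c) = (c - a)/(b*c) := by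
    intro a b c hb hc
    field_simp
  have hD1 : (k:ℂ)*W^2 ≠ 0 := mul_ne_zero hkc (pow_ne_zero 2 hW0)
  have hD2 : W*(ℓ:ℂ)*((k:ℂ)*W*Complex.sinh (W*(ℓ:ℂ)) + (g:ℂ)*s*Complex.sinh (W*(p:ℂ))*Complex.sinh (W*Q)) ≠ 0 :=
    mul_ne_zero (mul_ne_zero hW0 hlc) hη
  rw [habc _ _ _ hD1 hD2]
  rw [div_eq_div_iff (mul_ne_zero (mul_ne_zero hkc hlc) hinne) (mul_ne_zero hD1 hD2)]
  have hgenC : ∀ x c : ℂ, c ≠ 0 → x = c + c^3*((x - c)/c^3) := by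
    intro x c hc; field_simp; ring
  have hgenB : ∀ x c : ℂ, c ≠ 0 → x = c*(x/c) := by
    intro x c hc; field_simp
  have hWl : W * (ℓ:ℂ) ≠ 0 := mul_ne_zero hW0 hlc
  have hWp : W * (p:ℂ) ≠ 0 := mul_ne_zero hW0 hpc
  have hWq : W * Q ≠ 0 := mul_ne_zero hW0 hqc
  generalize hC1 : (Complex.sinh (W*(ℓ:ℂ)) - W*(ℓ:ℂ))/(W*(ℓ:ℂ))^3 = C1
  have hs1 : Complex.sinh (W*(ℓ:ℂ)) = W*(ℓ:ℂ) + (W*(ℓ:ℂ))^3*C1 := by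
    rw [← hC1]
    field_simp
    ring
  rw [hs1]
  generalize hC2 : (Complex.sinh (W*(ℓ:ℂ)/2) - W*(ℓ:ℂ)/2)/(W*(ℓ:ℂ)/2)^3 = C2
  have hs2 : Complex.sinh (W*(ℓ:ℂ)/2) = W*(ℓ:ℂ)/2 + (W*(ℓ:ℂ)/2)^3*C2 := by
    rw [← hC2]
    exact hgenC _ _ (div_ne_zero hWl two_ne_zero)
  rw [hs2]
  generalize hB3 : Complex.sinh (W*(p:ℂ))/(W*(p:ℂ)) = B3
  have hs3 : Complex.sinh (W*(p:ℂ)) = W*(p:ℂ)*B3 := by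
    rw [← hB3]
    field_simp
  rw [hs3]
  generalize hB4 : Complex.sinh (W*Q)/(W*Q) = B4
  have hs4 : Complex.sinh (W*Q) = W*Q*B4 := by
    rw [← hB4]
    field_simp
  rw [hs4]
  generalize hB5 : Complex.sinh (W*(p:ℂ)/2)/(W*(p:ℂ)/2) = B5
  have hs5 : Complex.sinh (W*(p:ℂ)/2) = W*(p:ℂ)/2*B5 := by
    rw [← hB5]
    exact hgenB _ _ (div_ne_zero hWp two_ne_zero)
  rw [hs5]
  generalize hB6 : Complex.sinh (W*Q/2)/(W*Q/2) = B6
  have hs6 : Complex.sinh (W*Q/2) = W*Q/2*B6 := by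
    rw [← hB6]
    exact hgenB _ _ (div_ne_zero hWq two_ne_zero)
  rw [hs6]
  generalize hV : s/W^2 = V
  have hsV : s = W^2*V := by
    rw [← hV]
    field_simp
  rw [hsV]
  ring
end

section
/- Infinite-viscosity limit of the uniform-forcing output transfer function: fix a complex number s with s ≠ 0 and s² + d·s ≠ 0, and a complex z ≠ 0 with k·z² = s² + d·s such that sinh(z·𝔭) ≠ 0 and sinh(z·(ℓ−𝔭)) ≠ 0. Then, as the real viscosity 𝔤 tends to +∞, the function 𝔤 ↦ (1/(s² + d·s))·(1 − γ(𝔤)/(z·ℓ·η(𝔤))) tends to (z·ℓ − 2·(tanh(z·𝔭/2) + tanh(z·(ℓ−𝔭)/2)))/(z·ℓ·(s² + d·s)). -/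
open Filter Complex

/-- Infinite-viscosity limit of the uniform-forcing output transfer function. -/
theorem uniform_forcing_output_infinite_viscosity_limit
    (ℓ k d p : ℝ) (hℓ : 0 < ℓ) (hk : 0 < k) (hd : 0 < d)
    (hp0 : 0 < p) (hpℓ : p < ℓ)
    (s z : ℂ) (hs0 : s ≠ 0) (hs : s ^ 2 + (d : ℂ) * s ≠ 0) (hz0 : z ≠ 0)
    (hz : (k : ℂ) * z ^ 2 = s ^ 2 + (d : ℂ) * s)
    (hsp : Complex.sinh (z * (p : ℂ)) ≠ 0)
    (hslp : Complex.sinh (z * ((ℓ : ℂ) - (p : ℂ))) ≠ 0) :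
    Filter.Tendsto
      (fun g : ℝ =>
        (1 / (s ^ 2 + (d : ℂ) * s)) *
          (1 -
            (4 * (k : ℂ) * z * Complex.sinh (z * (ℓ : ℂ) / 2) ^ 2 +
              8 * (g : ℂ) * s * Complex.sinh (z * (ℓ : ℂ) / 2) *
                Complex.sinh (z * (p : ℂ) / 2) *
                Complex.sinh (z * ((ℓ : ℂ) - (p : ℂ)) / 2)) /
            (z * (ℓ : ℂ) *
              ((k : ℂ) * z * Complex.sinh (z * (ℓ : ℂ)) +
                (g : ℂ) * s * Complex.sinh (z * (p : ℂ)) *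
                  Complex.sinh (z * ((ℓ : ℂ) - (p : ℂ)))))))
      Filter.atTop
      (nhds ((z * (ℓ : ℂ) -
          2 * (Complex.tanh (z * (p : ℂ) / 2) + Complex.tanh (z * ((ℓ : ℂ) - (p : ℂ)) / 2))) /
        (z * (ℓ : ℂ) * (s ^ 2 + (d : ℂ) * s)))) := by
  have hℓ0 : (ℓ : ℂ) ≠ 0 := by exact_mod_cast ne_of_gt hℓ
  have hLne : z * (ℓ : ℂ) ≠ 0 := mul_ne_zero hz0 hℓ0
  have hDne : s * Complex.sinh (z * (p : ℂ)) * Complex.sinh (z * ((ℓ : ℂ) - (p : ℂ))) ≠ 0 :=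
    mul_ne_zero (mul_ne_zero hs0 hsp) hslp
  have hinv : Tendsto (fun g : ℝ => ((g : ℂ))⁻¹) atTop (nhds 0) := by
    have h1 : Tendsto (fun g : ℝ => g⁻¹) atTop (nhds (0 : ℝ)) := tendsto_inv_atTop_zero
    have h2 : Tendsto (fun g : ℝ => ((g⁻¹ : ℝ) : ℂ)) atTop (nhds ((0 : ℝ) : ℂ)) :=
      (Complex.continuous_ofReal.tendsto 0).comp h1
    simpa using h2
  -- abbreviations (plain terms, no `set`, to keep the goal syntactically intact)
  have key : ∀ A B C D : ℂ, D ≠ 0 →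
      Tendsto (fun g : ℝ => (A + (g : ℂ) * B) / (C + (g : ℂ) * D)) atTop (nhds (B / D)) := by
    intro A B C D hDne
    have h3 : Tendsto (fun g : ℝ => (A * ((g : ℂ))⁻¹ + B) / (C * ((g : ℂ))⁻¹ + D)) atTop
        (nhds ((A * 0 + B) / (C * 0 + D))) := by
      refine Tendsto.div ?_ ?_ ?_
      · exact (tendsto_const_nhds.mul hinv).add tendsto_const_nhds
      · exact (tendsto_const_nhds.mul hinv).add tendsto_const_nhds
      · simpa using hDne
    simp only [mul_zero, zero_add] at h3
    refine h3.congr' ?_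
    filter_upwards [eventually_gt_atTop (0 : ℝ)] with g hg
    have hgc : (g : ℂ) ≠ 0 := by exact_mod_cast ne_of_gt hg
    have e1 : A * ((g : ℂ))⁻¹ + B = (A + (g : ℂ) * B) * ((g : ℂ))⁻¹ := by
      field_simp
    have e2 : C * ((g : ℂ))⁻¹ + D = (C + (g : ℂ) * D) * ((g : ℂ))⁻¹ := by
      field_simp
    rw [e1, e2, mul_div_mul_right _ _ (inv_ne_zero hgc)]
  have key' := key
    (4 * (k : ℂ) * z * Complex.sinh (z * (ℓ : ℂ) / 2) ^ 2)
    (8 * s * Complex.sinh (z * (ℓ : ℂ) / 2) * Complex.sinh (z * (p : ℂ) / 2) *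
      Complex.sinh (z * ((ℓ : ℂ) - (p : ℂ)) / 2))
    ((k : ℂ) * z * Complex.sinh (z * (ℓ : ℂ)))
    (s * Complex.sinh (z * (p : ℂ)) * Complex.sinh (z * ((ℓ : ℂ) - (p : ℂ))))
    hDne
  have main : Tendsto
      (fun g : ℝ => (1 / (s ^ 2 + (d : ℂ) * s)) *
        ((1 : ℂ) -
          ((4 * (k : ℂ) * z * Complex.sinh (z * (ℓ : ℂ) / 2) ^ 2 +
              (g : ℂ) * (8 * s * Complex.sinh (z * (ℓ : ℂ) / 2) *
                Complex.sinh (z * (p : ℂ) / 2) * Complex.sinh (z * ((ℓ : ℂ) - (p : ℂ)) / 2))) /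
            ((k : ℂ) * z * Complex.sinh (z * (ℓ : ℂ)) +
              (g : ℂ) * (s * Complex.sinh (z * (p : ℂ)) *
                Complex.sinh (z * ((ℓ : ℂ) - (p : ℂ)))))) / (z * (ℓ : ℂ)))) atTop
      (nhds ((1 / (s ^ 2 + (d : ℂ) * s)) *
        ((1 : ℂ) -
          (8 * s * Complex.sinh (z * (ℓ : ℂ) / 2) * Complex.sinh (z * (p : ℂ) / 2) *
              Complex.sinh (z * ((ℓ : ℂ) - (p : ℂ)) / 2) /
            (s * Complex.sinh (z * (p : ℂ)) * Complex.sinh (z * ((ℓ : ℂ) - (p : ℂ))))) /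
          (z * (ℓ : ℂ))))) :=
    (tendsto_const_nhds.sub (key'.div_const (z * (ℓ : ℂ)))).const_mul
      (1 / (s ^ 2 + (d : ℂ) * s))
  -- identify the limit value
  have hsa : Complex.sinh (z * (p : ℂ)) =
      2 * Complex.sinh (z * (p : ℂ) / 2) * Complex.cosh (z * (p : ℂ) / 2) := by
    have h := Complex.sinh_two_mul (z * (p : ℂ) / 2)
    rw [show (2 : ℂ) * (z * (p : ℂ) / 2) = z * (p : ℂ) from by ring] at h
    exact h
  have hsb : Complex.sinh (z * ((ℓ : ℂ) - (p : ℂ))) =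
      2 * Complex.sinh (z * ((ℓ : ℂ) - (p : ℂ)) / 2) *
        Complex.cosh (z * ((ℓ : ℂ) - (p : ℂ)) / 2) := by
    have h := Complex.sinh_two_mul (z * ((ℓ : ℂ) - (p : ℂ)) / 2)
    rw [show (2 : ℂ) * (z * ((ℓ : ℂ) - (p : ℂ)) / 2) = z * ((ℓ : ℂ) - (p : ℂ)) from by ring] at h
    exact h
  have hca : Complex.cosh (z * (p : ℂ) / 2) ≠ 0 := by
    intro h; apply hsp; rw [hsa, h]; ring
  have hcb : Complex.cosh (z * ((ℓ : ℂ) - (p : ℂ)) / 2) ≠ 0 := by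
    intro h; apply hslp; rw [hsb, h]; ring
  have hsane : Complex.sinh (z * (p : ℂ) / 2) ≠ 0 := by
    intro h; apply hsp; rw [hsa, h]; ring
  have hsbne : Complex.sinh (z * ((ℓ : ℂ) - (p : ℂ)) / 2) ≠ 0 := by
    intro h; apply hslp; rw [hsb, h]; ring
  have hsl : Complex.sinh (z * (ℓ : ℂ) / 2) =
      Complex.sinh (z * (p : ℂ) / 2) * Complex.cosh (z * ((ℓ : ℂ) - (p : ℂ)) / 2) +
        Complex.cosh (z * (p : ℂ) / 2) * Complex.sinh (z * ((ℓ : ℂ) - (p : ℂ)) / 2) := by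
    rw [show z * (ℓ : ℂ) / 2 = z * (p : ℂ) / 2 + z * ((ℓ : ℂ) - (p : ℂ)) / 2 from by ring,
      Complex.sinh_add]
  have hQ : 8 * s * Complex.sinh (z * (ℓ : ℂ) / 2) * Complex.sinh (z * (p : ℂ) / 2) *
        Complex.sinh (z * ((ℓ : ℂ) - (p : ℂ)) / 2) /
      (s * Complex.sinh (z * (p : ℂ)) * Complex.sinh (z * ((ℓ : ℂ) - (p : ℂ)))) =
      2 * Complex.sinh (z * (ℓ : ℂ) / 2) /
        (Complex.cosh (z * (p : ℂ) / 2) * Complex.cosh (z * ((ℓ : ℂ) - (p : ℂ)) / 2)) := by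
    rw [hsa, hsb]
    rw [div_eq_div_iff (by
        refine mul_ne_zero (mul_ne_zero hs0 ?_) ?_
        · exact mul_ne_zero (mul_ne_zero two_ne_zero hsane) hca
        · exact mul_ne_zero (mul_ne_zero two_ne_zero hsbne) hcb)
      (mul_ne_zero hca hcb)]
    ring
  have hval : (1 / (s ^ 2 + (d : ℂ) * s)) *
      (1 - (8 * s * Complex.sinh (z * (ℓ : ℂ) / 2) * Complex.sinh (z * (p : ℂ) / 2) *
            Complex.sinh (z * ((ℓ : ℂ) - (p : ℂ)) / 2) /
          (s * Complex.sinh (z * (p : ℂ)) * Complex.sinh (z * ((ℓ : ℂ) - (p : ℂ)))) /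
        (z * (ℓ : ℂ)))) =
      (z * (ℓ : ℂ) -
          2 * (Complex.tanh (z * (p : ℂ) / 2) + Complex.tanh (z * ((ℓ : ℂ) - (p : ℂ)) / 2))) /
        (z * (ℓ : ℂ) * (s ^ 2 + (d : ℂ) * s)) := by
    rw [hQ, Complex.tanh_eq_sinh_div_cosh, Complex.tanh_eq_sinh_div_cosh, hsl]
    field_simp
  rw [hval] at main
  refine main.congr fun g => ?_
  rw [div_div]
  ring
end

section
/- The function s ↦ (z(s)·ℓ·η(s) − γ(s))/z(s)⁵ tends to k·ℓ⁴/12 as s → 0 within the set {s ∈ ℂ : s ≠ 0 and s ≠ −d}, where z(s) is the principal complex square root of (s² + d·s)/k. -/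
open Complex Filter Topology Finset Nat

private lemma exp_rem (n : ℕ) :
    Tendsto (fun v : ℂ => (Complex.exp v - ∑ i ∈ Finset.range (n + 1), v ^ i / (i !)) / v ^ n)
      (𝓝[≠] (0 : ℂ)) (𝓝 0) := by
  set C : ℝ := ((n:ℝ) + 1 + 1) * (((n:ℝ) + 1)⁻¹ * ((((n + 1)! : ℕ)) : ℝ)⁻¹) with hC
  apply squeeze_zero_norm' (a := fun v : ℂ => ‖v‖ * C)
  · have h1 : ∀ᶠ v : ℂ in 𝓝[≠] 0, ‖v‖ ≤ 1 := by
      have : ∀ᶠ v : ℂ in 𝓝 0, ‖v‖ ≤ 1 := by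
        filter_upwards [Metric.closedBall_mem_nhds (0:ℂ) one_pos] with v hv
        simpa [Metric.mem_closedBall] using hv
      exact this.filter_mono nhdsWithin_le_nhds
    filter_upwards [h1, eventually_mem_nhdsWithin] with v hv hv0
    have hb := Complex.exp_bound (x := v) (by simpa using hv) (Nat.succ_pos n)
    rw [norm_div, norm_pow]
    have hvn : (0:ℝ) < ‖v‖ ^ n ∨ True := Or.inr trivial
    rcases eq_or_lt_of_le (norm_nonneg v) with h0 | hpos
    · exact absurd (norm_eq_zero.mp h0.symm) hv0
    · rw [div_le_iff₀ (by positivity)]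
      calc ‖Complex.exp v - ∑ i ∈ Finset.range (n + 1), v ^ i / (i !)‖
          ≤ ‖v‖ ^ (n+1) * C := by
            rw [hC]; simpa using hb
        _ = ‖v‖ * C * ‖v‖ ^ n := by ring
  · have : Tendsto (fun v : ℂ => ‖v‖ * C) (𝓝 (0:ℂ)) (𝓝 (‖(0:ℂ)‖ * C)) :=
      (continuous_norm.mul continuous_const).tendsto 0
    simpa using this.mono_left nhdsWithin_le_nhds

private lemma neg_tendsto : Tendsto (fun v : ℂ => -v) (𝓝[≠] (0:ℂ)) (𝓝[≠] (0:ℂ)) := by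
  rw [tendsto_nhdsWithin_iff]
  constructor
  · simpa using (continuous_neg.tendsto (0:ℂ)).mono_left (nhdsWithin_le_nhds)
  · filter_upwards [eventually_mem_nhdsWithin] with v hv
    simpa using hv

private lemma sinh_rem :
    Tendsto (fun v : ℂ => (Complex.sinh v - v - v ^ 3 / 6) / v ^ 4) (𝓝[≠] (0:ℂ)) (𝓝 0) := by
  have h1 := exp_rem 4
  have h2 := (exp_rem 4).comp neg_tendsto
  have h3 := (h1.sub h2).div_const 2
  have h4 : Tendsto (fun v : ℂ =>
      ((Complex.exp v - ∑ i ∈ Finset.range 5, v ^ i / (i !)) / v ^ 4 -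
        (Complex.exp (-v) - ∑ i ∈ Finset.range 5, (-v) ^ i / (i !)) / (-v) ^ 4) / 2)
      (𝓝[≠] (0:ℂ)) (𝓝 0) := by
    simpa using h3
  apply h4.congr'
  filter_upwards [eventually_mem_nhdsWithin] with v hv
  have hv0 : (v:ℂ) ≠ 0 := hv
  simp only [Complex.sinh, Finset.sum_range_succ, Finset.sum_range_zero, Nat.factorial]
  push_cast
  rw [show ((-v):ℂ) ^ 4 = v ^ 4 by ring, ← sub_div, div_div,
    div_eq_div_iff (by simpa using pow_ne_zero 4 hv0 : (v:ℂ) ^ 4 * 2 ≠ 0) (pow_ne_zero 4 hv0)]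
  ring

private noncomputable def Rr (c w : ℂ) : ℂ :=
  (Complex.sinh (w * c) - w * c - (w * c) ^ 3 / 6) / w ^ 4

private lemma Rr_tendsto (c : ℂ) (hc : c ≠ 0) :
    Tendsto (fun w : ℂ => Rr c w) (𝓝[≠] (0:ℂ)) (𝓝 0) := by
  have hmul : Tendsto (fun w : ℂ => w * c) (𝓝[≠] (0:ℂ)) (𝓝[≠] (0:ℂ)) := by
    rw [tendsto_nhdsWithin_iff]
    constructor
    · have h0 : Tendsto (fun w : ℂ => w * c) (nhds 0) (nhds (0 * c)) :=
        (continuous_mul_right c).tendsto 0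
      rw [zero_mul] at h0
      exact h0.mono_left nhdsWithin_le_nhds
    · filter_upwards [eventually_mem_nhdsWithin] with w hw
      exact mul_ne_zero hw hc
  have h := (sinh_rem.comp hmul).const_mul (c ^ 4)
  rw [mul_zero] at h
  apply h.congr'
  filter_upwards [eventually_mem_nhdsWithin] with w hw
  have hw0 : (w:ℂ) ≠ 0 := hw
  simp only [Function.comp, Rr]
  field_simp

private lemma sinh_eq_poly (c : ℂ) {w : ℂ} (hw : w ≠ 0) :
    Complex.sinh (w * c) = w * c + (w * c) ^ 3 / 6 + w ^ 4 * Rr c w := by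
  simp only [Rr]
  field_simp
  ring

private lemma tendsto_w : Tendsto (fun w : ℂ => w) (𝓝[≠] (0:ℂ)) (𝓝 0) :=
  tendsto_id.mono_left nhdsWithin_le_nhds

private lemma phi_lim (l : ℂ) (hl : l ≠ 0) :
    Tendsto (fun w : ℂ =>
      (w * l * Complex.sinh (w * l) - 4 * Complex.sinh (w * l / 2) ^ 2) / w ^ 4)
      (𝓝[≠] (0:ℂ)) (𝓝 (l ^ 4 / 12)) := by
  have h1 := Rr_tendsto l hl
  have h2 := Rr_tendsto (l/2) (div_ne_zero hl two_ne_zero)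
  have hcont : Continuous (fun x : ℂ × ℂ × ℂ =>
      l ^ 4 / 12 - l ^ 6 / 576 * x.1 ^ 2 + l * x.1 * x.2.1
      - 8 * (l * x.1 / 2 + l ^ 3 * x.1 ^ 3 / 48) * x.2.2 - 4 * x.1 ^ 4 * x.2.2 ^ 2) := by
    fun_prop
  have htuple : Tendsto (fun w : ℂ => (w, Rr l w, Rr (l/2) w)) (𝓝[≠] (0:ℂ))
      (𝓝 ((0:ℂ), (0:ℂ), (0:ℂ))) := tendsto_w.prodMk_nhds (h1.prodMk_nhds h2)
  have hG := (hcont.tendsto ((0:ℂ), (0:ℂ), (0:ℂ))).comp htuple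
  have hG2 : Tendsto (fun w : ℂ => l ^ 4 / 12 - l ^ 6 / 576 * w ^ 2 + l * w * Rr l w
      - 8 * (l * w / 2 + l ^ 3 * w ^ 3 / 48) * Rr (l/2) w - 4 * w ^ 4 * Rr (l/2) w ^ 2)
      (𝓝[≠] (0:ℂ)) (𝓝 (l ^ 4 / 12)) := by
    simpa [Function.comp_def] using hG
  apply hG2.congr'
  filter_upwards [eventually_mem_nhdsWithin] with w hw
  have hw0 : (w:ℂ) ≠ 0 := hw
  rw [show w * l / 2 = w * (l / 2) by ring, sinh_eq_poly l hw0, sinh_eq_poly (l/2) hw0]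
  field_simp
  ring

set_option maxHeartbeats 2000000 in
private lemma psi_lim (l p q : ℂ) (hl : l ≠ 0) (hp : p ≠ 0) (hq : q ≠ 0) :
    ∃ L : ℂ, Tendsto (fun w : ℂ =>
      (w * l * Complex.sinh (w * p) * Complex.sinh (w * q)
        - 8 * Complex.sinh (w * l / 2) * Complex.sinh (w * p / 2) *
          Complex.sinh (w * q / 2)) / w ^ 5)
      (𝓝[≠] (0:ℂ)) (𝓝 L) := by
  refine ⟨l * p * q * (3 * p ^ 2 + 3 * q ^ 2 - l ^ 2) / 24, ?_⟩
  have hRp := Rr_tendsto p hp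
  have hRq := Rr_tendsto q hq
  have hR1 := Rr_tendsto (l/2) (div_ne_zero hl two_ne_zero)
  have hR2 := Rr_tendsto (p/2) (div_ne_zero hp two_ne_zero)
  have hR3 := Rr_tendsto (q/2) (div_ne_zero hq two_ne_zero)
  set F : ℂ × ℂ × ℂ × ℂ × ℂ × ℂ → ℂ := fun x =>
    l * p * q * (3 * p ^ 2 + 3 * q ^ 2 - l ^ 2) / 24
    + l * p * q * (15 * p ^ 2 * q ^ 2 - l ^ 2 * q ^ 2 - l ^ 2 * p ^ 2) / 576 * x.1 ^ 2
    - l ^ 3 * p ^ 3 * q ^ 3 / 13824 * x.1 ^ 4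
    + l * (p * x.1 + p ^ 3 * x.1 ^ 3 / 6) * x.2.2.1
    + l * (q * x.1 + q ^ 3 * x.1 ^ 3 / 6) * x.2.1
    + l * x.1 ^ 4 * x.2.1 * x.2.2.1
    - 8 * x.1 * (x.2.2.2.1 * ((p / 2 + (p / 2) ^ 3 * x.1 ^ 2 / 6) * (q / 2 + (q / 2) ^ 3 * x.1 ^ 2 / 6))
        + x.2.2.2.2.1 * ((l / 2 + (l / 2) ^ 3 * x.1 ^ 2 / 6) * (q / 2 + (q / 2) ^ 3 * x.1 ^ 2 / 6))
        + x.2.2.2.2.2 * ((l / 2 + (l / 2) ^ 3 * x.1 ^ 2 / 6) * (p / 2 + (p / 2) ^ 3 * x.1 ^ 2 / 6)))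
    - 8 * x.1 ^ 3 * (x.2.2.2.1 * x.2.2.2.2.1 * (q / 2 * x.1 + (q / 2) ^ 3 * x.1 ^ 3 / 6)
        + x.2.2.2.1 * x.2.2.2.2.2 * (p / 2 * x.1 + (p / 2) ^ 3 * x.1 ^ 3 / 6)
        + x.2.2.2.2.1 * x.2.2.2.2.2 * (l / 2 * x.1 + (l / 2) ^ 3 * x.1 ^ 3 / 6))
    - 8 * x.1 ^ 7 * x.2.2.2.1 * x.2.2.2.2.1 * x.2.2.2.2.2 with hF
  have hcont : Continuous F := by rw [hF]; fun_prop
  have htuple : Tendsto (fun w : ℂ => (w, Rr p w, Rr q w, Rr (l/2) w, Rr (p/2) w, Rr (q/2) w))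
      (𝓝[≠] (0:ℂ)) (𝓝 ((0:ℂ), (0:ℂ), (0:ℂ), (0:ℂ), (0:ℂ), (0:ℂ))) :=
    tendsto_w.prodMk_nhds (hRp.prodMk_nhds (hRq.prodMk_nhds
      (hR1.prodMk_nhds (hR2.prodMk_nhds hR3))))
  have hG := (hcont.tendsto ((0:ℂ), (0:ℂ), (0:ℂ), (0:ℂ), (0:ℂ), (0:ℂ))).comp htuple
  have hG2 : Tendsto (fun w : ℂ =>
      F (w, Rr p w, Rr q w, Rr (l/2) w, Rr (p/2) w, Rr (q/2) w))
      (𝓝[≠] (0:ℂ)) (𝓝 (l * p * q * (3 * p ^ 2 + 3 * q ^ 2 - l ^ 2) / 24)) := by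
    have hv : F ((0:ℂ), (0:ℂ), (0:ℂ), (0:ℂ), (0:ℂ), (0:ℂ))
        = l * p * q * (3 * p ^ 2 + 3 * q ^ 2 - l ^ 2) / 24 := by
      rw [hF]; norm_num
    rw [← hv]
    exact hG
  apply hG2.congr'
  filter_upwards [eventually_mem_nhdsWithin] with w hw
  have hw0 : (w:ℂ) ≠ 0 := hw
  rw [hF]
  simp only []
  rw [show w * l / 2 = w * (l / 2) by ring, show w * p / 2 = w * (p / 2) by ring,
    show w * q / 2 = w * (q / 2) by ring,
    sinh_eq_poly p hw0, sinh_eq_poly q hw0, sinh_eq_poly (l/2) hw0,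
    sinh_eq_poly (p/2) hw0, sinh_eq_poly (q/2) hw0]
  field_simp
  ring

/-- The auxiliary limit `(z(s) ℓ η(s) - γ(s))/z(s)⁵ → k ℓ⁴ / 12` as `s → 0` within
`{s : s ≠ 0 ∧ s ≠ -d}`, where `z(s)` is the principal square root of `(s² + d s)/k`. -/
theorem zle_eta_sub_gamma_div_z5_limit_at_zero
    (ℓ k d p g : ℝ) (hℓ : 0 < ℓ) (hk : 0 < k) (hd : 0 < d)
    (hp0 : 0 < p) (hpℓ : p < ℓ) (hg : 0 ≤ g) :
    Filter.Tendsto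
      (fun s : ℂ =>
        let z : ℂ := ((s ^ 2 + (d : ℂ) * s) / (k : ℂ)) ^ (1 / 2 : ℂ)
        let η : ℂ := (k : ℂ) * z * Complex.sinh (z * (ℓ : ℂ)) +
          (g : ℂ) * s * Complex.sinh (z * (p : ℂ)) * Complex.sinh (z * ((ℓ : ℂ) - (p : ℂ)))
        let γ : ℂ := 4 * (k : ℂ) * z * Complex.sinh (z * (ℓ : ℂ) / 2) ^ 2 +
          8 * (g : ℂ) * s * Complex.sinh (z * (ℓ : ℂ) / 2) * Complex.sinh (z * (p : ℂ) / 2) *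
            Complex.sinh (z * ((ℓ : ℂ) - (p : ℂ)) / 2)
        (z * (ℓ : ℂ) * η - γ) / z ^ 5)
      (nhdsWithin 0 {s : ℂ | s ≠ 0 ∧ s ≠ -(d : ℂ)})
      (nhds ((k : ℂ) * (ℓ : ℂ) ^ 4 / 12)) := by
  have hkC : (k:ℂ) ≠ 0 := Complex.ofReal_ne_zero.mpr hk.ne'
  have hlC : (ℓ:ℂ) ≠ 0 := Complex.ofReal_ne_zero.mpr hℓ.ne'
  have hpC : (p:ℂ) ≠ 0 := Complex.ofReal_ne_zero.mpr hp0.ne'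
  have hqC : ((ℓ:ℂ) - (p:ℂ)) ≠ 0 := by
    rw [← Complex.ofReal_sub]
    exact Complex.ofReal_ne_zero.mpr (sub_ne_zero.mpr (ne_of_gt hpℓ))
  set S : Set ℂ := {s : ℂ | s ≠ 0 ∧ s ≠ -(d:ℂ)} with hS
  set z : ℂ → ℂ := fun s => ((s ^ 2 + (d:ℂ) * s) / (k:ℂ)) ^ (1/2 : ℂ) with hzdef
  have hb : Tendsto (fun s : ℂ => (s ^ 2 + (d:ℂ) * s) / (k:ℂ)) (𝓝 0) (𝓝 0) := by
    have hc : Continuous fun s : ℂ => (s ^ 2 + (d:ℂ) * s) / (k:ℂ) := by fun_prop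
    have h := hc.tendsto 0
    simpa using h
  have hz0 : Tendsto z (𝓝[S] 0) (𝓝 0) := by
    apply squeeze_zero_norm
      (a := fun s : ℂ => ‖(s ^ 2 + (d:ℂ) * s) / (k:ℂ)‖ ^ ((2:ℝ)⁻¹))
    · intro s
      have h := Complex.norm_cpow_le ((s ^ 2 + (d:ℂ) * s) / (k:ℂ)) (1/2 : ℂ)
      have h12 : ((1/2 : ℂ)).re = (2:ℝ)⁻¹ := by norm_num
      have h12' : ((1/2 : ℂ)).im = 0 := by norm_num
      rw [h12, h12', mul_zero, Real.exp_zero, div_one] at h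
      simpa [hzdef] using h
    · have habs : Tendsto (fun s : ℂ => ‖(s ^ 2 + (d:ℂ) * s) / (k:ℂ)‖)
          (𝓝 0) (𝓝 ‖(0:ℂ)‖) := (continuous_norm.tendsto 0).comp hb
      rw [norm_zero] at habs
      have hr := (Real.continuousAt_rpow_const 0 ((2:ℝ)⁻¹)
        (Or.inr (by norm_num))).tendsto.comp habs
      rw [Real.zero_rpow (by norm_num)] at hr
      exact hr.mono_left nhdsWithin_le_nhds
  have hzne : ∀ s ∈ S, z s ≠ 0 := by
    intro s hs
    obtain ⟨hs0, hsd⟩ := hs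
    simp only [hzdef, Ne, Complex.cpow_eq_zero_iff, not_and_or]
    left
    rw [div_eq_zero_iff]
    push_neg
    refine ⟨?_, hkC⟩
    have : s ^ 2 + (d:ℂ) * s = s * (s + d) := by ring
    rw [this]
    exact mul_ne_zero hs0 (by
      intro h
      exact hsd (by linear_combination h))
  have hzt : Tendsto z (𝓝[S] 0) (𝓝[≠] (0:ℂ)) :=
    tendsto_nhdsWithin_iff.mpr ⟨hz0, eventually_mem_nhdsWithin.mono fun s hs => hzne s hs⟩
  obtain ⟨L, hpsi⟩ := psi_lim (ℓ:ℂ) (p:ℂ) ((ℓ:ℂ) - (p:ℂ)) hlC hpC hqC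
  have hphi := phi_lim (ℓ:ℂ) hlC
  have hs0 : Tendsto (fun s : ℂ => s) (𝓝[S] 0) (𝓝 0) :=
    tendsto_id.mono_left nhdsWithin_le_nhds
  have hmain : Tendsto (fun s : ℂ =>
      (k:ℂ) * ((z s * (ℓ:ℂ) * Complex.sinh (z s * (ℓ:ℂ))
          - 4 * Complex.sinh (z s * (ℓ:ℂ) / 2) ^ 2) / (z s) ^ 4)
      + (g:ℂ) * s * ((z s * (ℓ:ℂ) * Complex.sinh (z s * (p:ℂ))
            * Complex.sinh (z s * ((ℓ:ℂ) - (p:ℂ)))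
          - 8 * Complex.sinh (z s * (ℓ:ℂ) / 2) * Complex.sinh (z s * (p:ℂ) / 2)
            * Complex.sinh (z s * ((ℓ:ℂ) - (p:ℂ)) / 2)) / (z s) ^ 5))
      (𝓝[S] 0) (𝓝 ((k:ℂ) * ((ℓ:ℂ) ^ 4 / 12) + (g:ℂ) * 0 * L)) := by
    exact (tendsto_const_nhds.mul (hphi.comp hzt)).add
      ((tendsto_const_nhds.mul hs0).mul (hpsi.comp hzt))
  rw [show (k:ℂ) * ((ℓ:ℂ) ^ 4 / 12) + (g:ℂ) * 0 * L = (k:ℂ) * (ℓ:ℂ) ^ 4 / 12 by ring] at hmain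
  apply hmain.congr'
  filter_upwards [eventually_mem_nhdsWithin] with s hs
  have hz' : z s ≠ 0 := hzne s hs
  show _ = ((z s * (ℓ:ℂ) * ((k:ℂ) * z s * Complex.sinh (z s * (ℓ:ℂ)) +
      (g:ℂ) * s * Complex.sinh (z s * (p:ℂ)) * Complex.sinh (z s * ((ℓ:ℂ) - (p:ℂ)))) -
      (4 * (k:ℂ) * z s * Complex.sinh (z s * (ℓ:ℂ) / 2) ^ 2 +
      8 * (g:ℂ) * s * Complex.sinh (z s * (ℓ:ℂ) / 2) * Complex.sinh (z s * (p:ℂ) / 2) *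
        Complex.sinh (z s * ((ℓ:ℂ) - (p:ℂ)) / 2))) / (z s) ^ 5)
  field_simp
  ring
end

section
/- The function s ↦ (z(s)·ℓ·𝔤·s·sinh(z(s)·𝔭)·sinh(z(s)·(ℓ−𝔭)) − 8·𝔤·s·sinh(z(s)·ℓ/2)·sinh(z(s)·𝔭/2)·sinh(z(s)·(ℓ−𝔭)/2))/z(s)⁵ tends to 0 as s → 0 within the set {s ∈ ℂ : s ≠ 0 and s ≠ −d}, where z(s) is the principal complex square root of (s² + d·s)/k. -/
open Complex Filter

noncomputable def ErX (x : ℂ) : ℂ := Complex.exp x - ∑ m ∈ Finset.range 5, x ^ m / m.factorial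

lemma ErX_bound {x : ℂ} (hx : ‖x‖ ≤ 1) : ‖ErX x‖ ≤ ‖x‖ ^ 5 := by
  have h := Complex.exp_bound (x := x) (by simpa using hx) (n := 5) (by norm_num)
  rw [ErX]
  calc ‖Complex.exp x - ∑ m ∈ Finset.range 5, x ^ m / m.factorial‖
      ≤ ‖x‖ ^ 5 * ((6 : ℝ) * ((120 : ℝ) * 5)⁻¹) := by
        simpa [Nat.factorial] using h
    _ ≤ ‖x‖ ^ 5 := by
        nlinarith [pow_nonneg (norm_nonneg x) 5]

noncomputable def RsX (x : ℂ) : ℂ := Complex.sinh x - (x + x ^ 3 / 6)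
noncomputable def RcX (x : ℂ) : ℂ := Complex.cosh x - (1 + x ^ 2 / 2 + x ^ 4 / 24)

lemma RsX_eq (x : ℂ) : RsX x = (ErX x - ErX (-x)) / 2 := by
  simp only [RsX, ErX, Complex.sinh, Finset.sum_range_succ, Finset.sum_range_zero]
  norm_num [Nat.factorial]
  ring

lemma RcX_eq (x : ℂ) : RcX x = (ErX x + ErX (-x)) / 2 := by
  simp only [RcX, ErX, Complex.cosh, Finset.sum_range_succ, Finset.sum_range_zero]
  norm_num [Nat.factorial]
  ring

lemma RsX_bound {x : ℂ} (hx : ‖x‖ ≤ 1) : ‖RsX x‖ ≤ ‖x‖ ^ 5 := by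
  rw [RsX_eq]
  have h1 := ErX_bound hx
  have h2 := ErX_bound (x := -x) (by simpa using hx)
  rw [norm_neg] at h2
  calc ‖(ErX x - ErX (-x)) / 2‖ ≤ (‖ErX x‖ + ‖ErX (-x)‖) / 2 := by
        rw [norm_div]
        gcongr ?_ / ?_
        · exact norm_sub_le _ _
        · norm_num
    _ ≤ ‖x‖ ^ 5 := by linarith

lemma RcX_bound {x : ℂ} (hx : ‖x‖ ≤ 1) : ‖RcX x‖ ≤ ‖x‖ ^ 5 := by
  rw [RcX_eq]
  have h1 := ErX_bound hx
  have h2 := ErX_bound (x := -x) (by simpa using hx)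
  rw [norm_neg] at h2
  calc ‖(ErX x + ErX (-x)) / 2‖ ≤ (‖ErX x‖ + ‖ErX (-x)‖) / 2 := by
        rw [norm_div]
        gcongr ?_ / ?_
        · exact norm_add_le _ _
        · norm_num
    _ ≤ ‖x‖ ^ 5 := by linarith

lemma sinh_mul_sinh' (a b : ℂ) :
    Complex.sinh a * Complex.sinh b = (Complex.cosh (a + b) - Complex.cosh (a - b)) / 2 := by
  simp only [Complex.sinh, Complex.cosh, sub_eq_add_neg, neg_add_rev, Complex.exp_add,
    Complex.exp_neg]
  field_simp [Complex.exp_ne_zero]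
  ring

lemma sinh_triple' (a b c : ℂ) :
    8 * Complex.sinh a * Complex.sinh b * Complex.sinh c =
      2 * (Complex.sinh (a + b + c) - Complex.sinh (a + b - c) - Complex.sinh (a - b + c)
        + Complex.sinh (a - b - c)) := by
  simp only [Complex.sinh, sub_eq_add_neg, neg_add_rev, neg_neg, Complex.exp_add]
  ring

lemma F_ident (ℓ p : ℝ) (w : ℂ) :
    w * (ℓ : ℂ) * (Complex.sinh (w * (p : ℂ)) * Complex.sinh (w * ((ℓ : ℂ) - (p : ℂ)))) -
      8 * Complex.sinh (w * (ℓ : ℂ) / 2) * Complex.sinh (w * (p : ℂ) / 2) *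
        Complex.sinh (w * ((ℓ : ℂ) - (p : ℂ)) / 2) =
    ((ℓ : ℂ) * ((ℓ : ℂ) ^ 4 - (2 * (p : ℂ) - (ℓ : ℂ)) ^ 4)) / 48 * w ^ 5 +
      w * (ℓ : ℂ) / 2 * (RcX (w * (ℓ : ℂ)) - RcX (w * (2 * (p : ℂ) - (ℓ : ℂ)))) -
      2 * (RsX (w * (ℓ : ℂ)) - RsX (w * (p : ℂ)) - RsX (w * ((ℓ : ℂ) - (p : ℂ)))) := by
  have h1 := sinh_mul_sinh' (w * (p : ℂ)) (w * ((ℓ : ℂ) - (p : ℂ)))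
  have h2 := sinh_triple' (w * (ℓ : ℂ) / 2) (w * (p : ℂ) / 2) (w * ((ℓ : ℂ) - (p : ℂ)) / 2)
  have e1 : w * (p : ℂ) + w * ((ℓ : ℂ) - (p : ℂ)) = w * (ℓ : ℂ) := by ring
  have e2 : w * (p : ℂ) - w * ((ℓ : ℂ) - (p : ℂ)) = w * (2 * (p : ℂ) - (ℓ : ℂ)) := by ring
  have e3 : w * (ℓ : ℂ) / 2 + w * (p : ℂ) / 2 + w * ((ℓ : ℂ) - (p : ℂ)) / 2 = w * (ℓ : ℂ) := by
    ring
  have e4 : w * (ℓ : ℂ) / 2 + w * (p : ℂ) / 2 - w * ((ℓ : ℂ) - (p : ℂ)) / 2 = w * (p : ℂ) := by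
    ring
  have e5 : w * (ℓ : ℂ) / 2 - w * (p : ℂ) / 2 + w * ((ℓ : ℂ) - (p : ℂ)) / 2 =
      w * ((ℓ : ℂ) - (p : ℂ)) := by ring
  have e6 : w * (ℓ : ℂ) / 2 - w * (p : ℂ) / 2 - w * ((ℓ : ℂ) - (p : ℂ)) / 2 = 0 := by ring
  rw [e1, e2] at h1
  rw [e3, e4, e5, e6, Complex.sinh_zero] at h2
  rw [h1]
  rw [show (8 : ℂ) * Complex.sinh (w * (ℓ : ℂ) / 2) * Complex.sinh (w * (p : ℂ) / 2) *
        Complex.sinh (w * ((ℓ : ℂ) - (p : ℂ)) / 2) =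
      2 * (Complex.sinh (w * (ℓ : ℂ)) - Complex.sinh (w * (p : ℂ)) -
        Complex.sinh (w * ((ℓ : ℂ) - (p : ℂ))) + 0) from h2]
  simp only [RsX, RcX]
  ring

lemma F_bound (ℓ p : ℝ) (hℓ : 0 < ℓ) (hp0 : 0 < p) (hpℓ : p < ℓ) (w : ℂ)
    (hw : ‖w‖ ≤ 1 / (1 + ℓ)) :
    ‖w * (ℓ : ℂ) * (Complex.sinh (w * (p : ℂ)) * Complex.sinh (w * ((ℓ : ℂ) - (p : ℂ)))) -
        8 * Complex.sinh (w * (ℓ : ℂ) / 2) * Complex.sinh (w * (p : ℂ) / 2) *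
          Complex.sinh (w * ((ℓ : ℂ) - (p : ℂ)) / 2)‖ ≤
      (‖((ℓ : ℂ) * ((ℓ : ℂ) ^ 4 - (2 * (p : ℂ) - (ℓ : ℂ)) ^ 4)) / 48‖ + ℓ ^ 6 + 6 * ℓ ^ 5) *
        ‖w‖ ^ 5 := by
  have h1ℓ : (0 : ℝ) < 1 + ℓ := by linarith
  have hw0 : (0 : ℝ) ≤ ‖w‖ := norm_nonneg w
  have hw1 : ‖w‖ ≤ 1 := hw.trans (by rw [div_le_one h1ℓ]; linarith)
  have hnorm : ∀ a : ℝ, ‖w * (a : ℂ)‖ = ‖w‖ * |a| := fun a => by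
    rw [norm_mul, Complex.norm_real, Real.norm_eq_abs]
  have hsmall : ∀ a : ℝ, |a| ≤ ℓ → ‖w * (a : ℂ)‖ ≤ 1 := by
    intro a ha
    rw [hnorm]
    calc ‖w‖ * |a| ≤ (1 / (1 + ℓ)) * ℓ := by
          exact mul_le_mul hw ha (abs_nonneg a) (by positivity)
      _ ≤ 1 := by rw [div_mul_eq_mul_div, div_le_one h1ℓ]; linarith
  have habs : ∀ a : ℝ, |a| ≤ ℓ → ‖w * (a : ℂ)‖ ^ 5 ≤ ℓ ^ 5 * ‖w‖ ^ 5 := by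
    intro a ha
    rw [hnorm]
    calc (‖w‖ * |a|) ^ 5 ≤ (‖w‖ * ℓ) ^ 5 := by
          apply pow_le_pow_left₀ (by positivity)
          exact mul_le_mul_of_nonneg_left ha hw0
      _ = ℓ ^ 5 * ‖w‖ ^ 5 := by ring
  have haℓ : |ℓ| ≤ ℓ := le_of_eq (abs_of_pos hℓ)
  have hap : |p| ≤ ℓ := abs_le.mpr ⟨by linarith, by linarith⟩
  have har : |ℓ - p| ≤ ℓ := abs_le.mpr ⟨by linarith, by linarith⟩
  have haq : |2 * p - ℓ| ≤ ℓ := abs_le.mpr ⟨by linarith, by linarith⟩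
  have cast1 : ((ℓ : ℂ) - (p : ℂ)) = ((ℓ - p : ℝ) : ℂ) := by push_cast; ring
  have cast2 : (2 * (p : ℂ) - (ℓ : ℂ)) = ((2 * p - ℓ : ℝ) : ℂ) := by push_cast; ring
  have Bs1 : ‖RsX (w * (ℓ : ℂ))‖ ≤ ℓ ^ 5 * ‖w‖ ^ 5 :=
    (RsX_bound (hsmall ℓ haℓ)).trans (habs ℓ haℓ)
  have Bs2 : ‖RsX (w * (p : ℂ))‖ ≤ ℓ ^ 5 * ‖w‖ ^ 5 :=
    (RsX_bound (hsmall p hap)).trans (habs p hap)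
  have Bs3 : ‖RsX (w * ((ℓ : ℂ) - (p : ℂ)))‖ ≤ ℓ ^ 5 * ‖w‖ ^ 5 := by
    rw [cast1]; exact (RsX_bound (hsmall _ har)).trans (habs _ har)
  have Bc1 : ‖RcX (w * (ℓ : ℂ))‖ ≤ ℓ ^ 5 * ‖w‖ ^ 5 :=
    (RcX_bound (hsmall ℓ haℓ)).trans (habs ℓ haℓ)
  have Bc2 : ‖RcX (w * (2 * (p : ℂ) - (ℓ : ℂ)))‖ ≤ ℓ ^ 5 * ‖w‖ ^ 5 := by
    rw [cast2]; exact (RcX_bound (hsmall _ haq)).trans (habs _ haq)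
  rw [F_ident ℓ p w]
  set A := ((ℓ : ℂ) * ((ℓ : ℂ) ^ 4 - (2 * (p : ℂ) - (ℓ : ℂ)) ^ 4)) / 48 * w ^ 5 with hA
  set B := w * (ℓ : ℂ) / 2 * (RcX (w * (ℓ : ℂ)) - RcX (w * (2 * (p : ℂ) - (ℓ : ℂ)))) with hB
  set Cc := (2 : ℂ) * (RsX (w * (ℓ : ℂ)) - RsX (w * (p : ℂ)) -
    RsX (w * ((ℓ : ℂ) - (p : ℂ)))) with hCc
  have tri : ‖A + B - Cc‖ ≤ ‖A‖ + ‖B‖ + ‖Cc‖ :=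
    (norm_sub_le _ _).trans (by gcongr; exact norm_add_le _ _)
  have nA : ‖A‖ = ‖((ℓ : ℂ) * ((ℓ : ℂ) ^ 4 - (2 * (p : ℂ) - (ℓ : ℂ)) ^ 4)) / 48‖ * ‖w‖ ^ 5 := by
    rw [hA, norm_mul, norm_pow]
  have nB : ‖B‖ ≤ ℓ ^ 6 * ‖w‖ ^ 5 := by
    rw [hB, norm_mul]
    have h1 : ‖w * (ℓ : ℂ) / 2‖ = ‖w‖ * ℓ / 2 := by
      rw [norm_div, hnorm, abs_of_pos hℓ]
      norm_num
    have h2 : ‖RcX (w * (ℓ : ℂ)) - RcX (w * (2 * (p : ℂ) - (ℓ : ℂ)))‖ ≤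
        2 * (ℓ ^ 5 * ‖w‖ ^ 5) := (norm_sub_le _ _).trans (by linarith)
    calc ‖w * (ℓ : ℂ) / 2‖ * ‖RcX (w * (ℓ : ℂ)) - RcX (w * (2 * (p : ℂ) - (ℓ : ℂ)))‖
        ≤ (‖w‖ * ℓ / 2) * (2 * (ℓ ^ 5 * ‖w‖ ^ 5)) := by
          rw [h1]
          exact mul_le_mul_of_nonneg_left h2 (by positivity)
      _ = ℓ ^ 6 * ‖w‖ ^ 5 * ‖w‖ := by ring
      _ ≤ ℓ ^ 6 * ‖w‖ ^ 5 * 1 := by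
          exact mul_le_mul_of_nonneg_left hw1 (by positivity)
      _ = ℓ ^ 6 * ‖w‖ ^ 5 := by ring
  have nC : ‖Cc‖ ≤ 6 * ℓ ^ 5 * ‖w‖ ^ 5 := by
    rw [hCc, norm_mul]
    have h2 : ‖RsX (w * (ℓ : ℂ)) - RsX (w * (p : ℂ)) - RsX (w * ((ℓ : ℂ) - (p : ℂ)))‖ ≤
        3 * (ℓ ^ 5 * ‖w‖ ^ 5) :=
      (norm_sub_le _ _).trans (by
        have := (norm_sub_le (RsX (w * (ℓ : ℂ))) (RsX (w * (p : ℂ))))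
        linarith)
    calc ‖(2 : ℂ)‖ * ‖RsX (w * (ℓ : ℂ)) - RsX (w * (p : ℂ)) - RsX (w * ((ℓ : ℂ) - (p : ℂ)))‖
        ≤ 2 * (3 * (ℓ ^ 5 * ‖w‖ ^ 5)) := by
          rw [show ‖(2 : ℂ)‖ = 2 by norm_num]
          exact mul_le_mul_of_nonneg_left h2 (by norm_num)
      _ = 6 * ℓ ^ 5 * ‖w‖ ^ 5 := by ring
  calc ‖A + B - Cc‖ ≤ ‖A‖ + ‖B‖ + ‖Cc‖ := tri
    _ ≤ ‖((ℓ : ℂ) * ((ℓ : ℂ) ^ 4 - (2 * (p : ℂ) - (ℓ : ℂ)) ^ 4)) / 48‖ * ‖w‖ ^ 5 +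
        ℓ ^ 6 * ‖w‖ ^ 5 + 6 * ℓ ^ 5 * ‖w‖ ^ 5 := by rw [nA]; linarith
    _ = (‖((ℓ : ℂ) * ((ℓ : ℂ) ^ 4 - (2 * (p : ℂ) - (ℓ : ℂ)) ^ 4)) / 48‖ + ℓ ^ 6 + 6 * ℓ ^ 5) *
        ‖w‖ ^ 5 := by ring


/-- The external-damping contribution to `(zℓη - γ)/z⁵` vanishes in the zero-frequency
limit: the limit is `0` as `s → 0` within `{s : s ≠ 0 ∧ s ≠ -d}`, where `z(s)` is the
principal square root of `(s² + d s)/k`. -/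
theorem external_damping_contribution_limit_at_zero
    (ℓ k d p g : ℝ) (hℓ : 0 < ℓ) (hk : 0 < k) (hd : 0 < d)
    (hp0 : 0 < p) (hpℓ : p < ℓ) (hg : 0 ≤ g) :
    Filter.Tendsto
      (fun s : ℂ =>
        let z : ℂ := ((s ^ 2 + (d : ℂ) * s) / (k : ℂ)) ^ (1 / 2 : ℂ)
        (z * (ℓ : ℂ) * ((g : ℂ) * s * Complex.sinh (z * (p : ℂ)) *
              Complex.sinh (z * ((ℓ : ℂ) - (p : ℂ)))) -
            8 * (g : ℂ) * s * Complex.sinh (z * (ℓ : ℂ) / 2) * Complex.sinh (z * (p : ℂ) / 2) *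
              Complex.sinh (z * ((ℓ : ℂ) - (p : ℂ)) / 2)) / z ^ 5)
      (nhdsWithin 0 {s : ℂ | s ≠ 0 ∧ s ≠ -(d : ℂ)})
      (nhds 0) := by

  set C : ℝ := ‖((ℓ : ℂ) * ((ℓ : ℂ) ^ 4 - (2 * (p : ℂ) - (ℓ : ℂ)) ^ 4)) / 48‖ + ℓ ^ 6 + 6 * ℓ ^ 5
    with hCdef
  set δ : ℝ := 1 / (1 + ℓ) with hδdef
  have hδpos : 0 < δ := by rw [hδdef]; positivity
  apply squeeze_zero_norm' (a := fun s : ℂ => g * C * ‖s‖)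
  · -- eventual bound
    have hcont : Continuous fun s : ℂ => ‖(s ^ 2 + (d : ℂ) * s) / (k : ℂ)‖ :=
      (((continuous_pow 2).add (continuous_const.mul continuous_id)).div_const _).norm
    have htd : Filter.Tendsto (fun s : ℂ => ‖(s ^ 2 + (d : ℂ) * s) / (k : ℂ)‖)
        (nhdsWithin 0 {s : ℂ | s ≠ 0 ∧ s ≠ -(d : ℂ)}) (nhds 0) := by
      apply Filter.Tendsto.mono_left _ nhdsWithin_le_nhds
      exact hcont.tendsto' 0 0 (by simp)
    have hev1 : ∀ᶠ s in nhdsWithin 0 {s : ℂ | s ≠ 0 ∧ s ≠ -(d : ℂ)},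
        ‖(s ^ 2 + (d : ℂ) * s) / (k : ℂ)‖ < δ ^ 2 := by
      have : (0 : ℝ) < δ ^ 2 := by positivity
      exact htd.eventually_lt_const this
    have hev2 : ∀ᶠ s in nhdsWithin 0 {s : ℂ | s ≠ 0 ∧ s ≠ -(d : ℂ)},
        s ∈ {s : ℂ | s ≠ 0 ∧ s ≠ -(d : ℂ)} := eventually_mem_nhdsWithin
    filter_upwards [hev1, hev2] with s hs1 hs2
    obtain ⟨hs0, hsd⟩ := hs2
    show ‖(((s ^ 2 + (d : ℂ) * s) / (k : ℂ)) ^ (1 / 2 : ℂ) * (ℓ : ℂ) *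
          ((g : ℂ) * s * Complex.sinh (((s ^ 2 + (d : ℂ) * s) / (k : ℂ)) ^ (1 / 2 : ℂ) * (p : ℂ)) *
            Complex.sinh (((s ^ 2 + (d : ℂ) * s) / (k : ℂ)) ^ (1 / 2 : ℂ) * ((ℓ : ℂ) - (p : ℂ)))) -
          8 * (g : ℂ) * s *
            Complex.sinh (((s ^ 2 + (d : ℂ) * s) / (k : ℂ)) ^ (1 / 2 : ℂ) * (ℓ : ℂ) / 2) *
            Complex.sinh (((s ^ 2 + (d : ℂ) * s) / (k : ℂ)) ^ (1 / 2 : ℂ) * (p : ℂ) / 2) *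
            Complex.sinh (((s ^ 2 + (d : ℂ) * s) / (k : ℂ)) ^ (1 / 2 : ℂ) * ((ℓ : ℂ) - (p : ℂ)) / 2)) /
          (((s ^ 2 + (d : ℂ) * s) / (k : ℂ)) ^ (1 / 2 : ℂ)) ^ 5‖ ≤ g * C * ‖s‖
    set z : ℂ := ((s ^ 2 + (d : ℂ) * s) / (k : ℂ)) ^ (1 / 2 : ℂ) with hzdef
    have hk' : (k : ℂ) ≠ 0 := Complex.ofReal_ne_zero.mpr hk.ne'
    have hwne : (s ^ 2 + (d : ℂ) * s) / (k : ℂ) ≠ 0 := by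
      have hsd' : s + (d : ℂ) ≠ 0 := by
        intro h
        exact hsd (by linear_combination h)
      have : s ^ 2 + (d : ℂ) * s = s * (s + (d : ℂ)) := by ring
      rw [this]
      exact div_ne_zero (mul_ne_zero hs0 hsd') hk'
    have hzne : z ≠ 0 := by
      rw [hzdef]
      intro h
      exact hwne ((Complex.cpow_eq_zero_iff _ _).mp h).1
    have hz2 : z ^ 2 = (s ^ 2 + (d : ℂ) * s) / (k : ℂ) := by
      rw [hzdef, pow_two, ← Complex.cpow_add _ _ hwne]
      norm_num
    have hznorm : ‖z‖ ≤ δ := by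
      have h2 : ‖z‖ ^ 2 < δ ^ 2 := by rw [← norm_pow, hz2]; exact hs1
      nlinarith [norm_nonneg z]
    have hFb := F_bound ℓ p hℓ hp0 hpℓ z (by rw [← hδdef]; exact hznorm)
    have hfact : z * (ℓ : ℂ) * ((g : ℂ) * s * Complex.sinh (z * (p : ℂ)) *
          Complex.sinh (z * ((ℓ : ℂ) - (p : ℂ)))) -
        8 * (g : ℂ) * s * Complex.sinh (z * (ℓ : ℂ) / 2) * Complex.sinh (z * (p : ℂ) / 2) *
          Complex.sinh (z * ((ℓ : ℂ) - (p : ℂ)) / 2) =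
        (g : ℂ) * s * (z * (ℓ : ℂ) * (Complex.sinh (z * (p : ℂ)) *
            Complex.sinh (z * ((ℓ : ℂ) - (p : ℂ)))) -
          8 * Complex.sinh (z * (ℓ : ℂ) / 2) * Complex.sinh (z * (p : ℂ) / 2) *
            Complex.sinh (z * ((ℓ : ℂ) - (p : ℂ)) / 2)) := by ring
    rw [hfact, norm_div, norm_mul, norm_mul, Complex.norm_real, Real.norm_eq_abs,
      _root_.abs_of_nonneg hg, norm_pow]
    rw [div_le_iff₀ (pow_pos (norm_pos_iff.mpr hzne) 5)]
    calc g * ‖s‖ * ‖_‖ ≤ g * ‖s‖ * (C * ‖z‖ ^ 5) := by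
          apply mul_le_mul_of_nonneg_left _ (by positivity)
          exact hFb
      _ = g * C * ‖s‖ * ‖z‖ ^ 5 := by ring
  · -- bound tends to 0
    have hcont : Continuous fun s : ℂ => g * C * ‖s‖ := by
      exact continuous_const.mul continuous_norm
    apply Filter.Tendsto.mono_left _ nhdsWithin_le_nhds
    exact hcont.tendsto' 0 0 (by simp)
end

section
/- For every complex number s, every complex z with k·z² = s² + d·s, and assuming η ≠ 0, the functions h₁, h₂ : ℝ → ℂ defined by h₁(x) = (k·z/η)·sinh(z·(ℓ − x)) + (𝔤·s/η)·sinh(z·(𝔭 − x))·sinh(z·(ℓ − 𝔭)) and h₂(x) = (k·z/η)·sinh(z·(ℓ − x)) satisfy the boundary and interface conditions of the boundary-forcing problem with unit input: h₁(0) = 1, h₂(ℓ) = 0, h₁(𝔭) = h₂(𝔭), and 𝔤·s·h₁(𝔭) = k·(h₂'(𝔭) − h₁'(𝔭)), where h₁' and h₂' denote the derivatives of h₁ and h₂. -/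
/-!
Both branches are multiples of `sinh (z (ℓ - x))`, which vanishes at `x = ℓ`, and they differ only by
the term `(𝔤 s / η) sinh (z (𝔭 - x)) sinh (z (ℓ - 𝔭))`, which vanishes at `x = 𝔭` and has slope
`-(𝔤 s / η) z sinh (z (ℓ - 𝔭))` there. This gives continuity at the damper and makes the jump of
`k h'` equal to `𝔤 s h(𝔭)`; at `x = 0` the numerator of `h₁` is exactly the expression defining `η`.
-/

lemma hasDerivAt_sinh_mul_sub_ofReal (z c : ℂ) (x : ℝ) :
    HasDerivAt (fun t : ℝ => Complex.sinh (z * (c - t))) (-(z * Complex.cosh (z * (c - x)))) x := by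
  have h := ((Complex.hasDerivAt_sinh _).comp (x : ℂ)
    (((hasDerivAt_id (x : ℂ)).const_sub c).const_mul z)).comp_ofReal
  exact h.congr_deriv (by simp only [id_eq]; ring)

theorem boundary_forcing_branches_boundary_interface_general
    (ℓ k p g : ℝ)
    (s z : ℂ)
    (η : ℂ)
    (hη : η = (k : ℂ) * z * Complex.sinh (z * (ℓ : ℂ)) +
      (g : ℂ) * s * Complex.sinh (z * (p : ℂ)) * Complex.sinh (z * ((ℓ : ℂ) - (p : ℂ))))
    (hη0 : η ≠ 0)
    (h₁ h₂ : ℝ → ℂ)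
    (hh₁ : h₁ = fun x : ℝ => ((k : ℂ) * z / η) * Complex.sinh (z * ((ℓ : ℂ) - (x : ℂ))) +
      ((g : ℂ) * s / η) * Complex.sinh (z * ((p : ℂ) - (x : ℂ))) *
        Complex.sinh (z * ((ℓ : ℂ) - (p : ℂ))))
    (hh₂ : h₂ = fun x : ℝ => ((k : ℂ) * z / η) * Complex.sinh (z * ((ℓ : ℂ) - (x : ℂ)))) :
    h₁ 0 = 1 ∧ h₂ ℓ = 0 ∧ h₁ p = h₂ p ∧
      (g : ℂ) * s * h₁ p = (k : ℂ) * (deriv h₂ p - deriv h₁ p) := by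
  set S := Complex.sinh (z * ((ℓ : ℂ) - (p : ℂ)))
  have h₁_eq_h₂_add : h₁ = fun x : ℝ => h₂ x + (g : ℂ) * s / η * Complex.sinh (z * ((p : ℂ) - x)) * S := by
    rw [hh₁, hh₂]
  have hderiv₂ : HasDerivAt h₂ ((k : ℂ) * z / η * -(z * Complex.cosh (z * ((ℓ : ℂ) - p)))) p :=
    hh₂ ▸ (hasDerivAt_sinh_mul_sub_ofReal z ℓ p).const_mul _
  have hderiv₁ : HasDerivAt h₁ (deriv h₂ p + (g : ℂ) * s / η * -(z * 1) * S) p := by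
    have h := hderiv₂.add (((hasDerivAt_sinh_mul_sub_ofReal z p p).const_mul
      ((g : ℂ) * s / η)).mul_const S)
    rw [sub_self, mul_zero, Complex.cosh_zero, ← hderiv₂.deriv] at h
    exact h₁_eq_h₂_add ▸ h
  have hcont : h₁ p = h₂ p := by simp [h₁_eq_h₂_add]
  refine ⟨?_, by simp [hh₂], hcont, ?_⟩
  · rw [hh₁]
    push_cast
    rw [sub_zero, sub_zero, ← div_self hη0, hη]
    ring
  · rw [hderiv₁.deriv, hcont, hh₂]
    ring

/-- The two branches of the boundary-forcing displacement transfer function satisfy the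
boundary and interface conditions of the boundary-forcing problem with unit input. -/
theorem boundary_forcing_branches_boundary_interface
    (ℓ k d p g : ℝ) (hℓ : 0 < ℓ) (hk : 0 < k) (hd : 0 < d)
    (hp0 : 0 < p) (hpℓ : p < ℓ) (hg : 0 ≤ g)
    (s z : ℂ) (hz : (k : ℂ) * z ^ 2 = s ^ 2 + (d : ℂ) * s)
    (η : ℂ)
    (hη : η = (k : ℂ) * z * Complex.sinh (z * (ℓ : ℂ)) +
      (g : ℂ) * s * Complex.sinh (z * (p : ℂ)) * Complex.sinh (z * ((ℓ : ℂ) - (p : ℂ))))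
    (hη0 : η ≠ 0)
    (h₁ h₂ : ℝ → ℂ)
    (hh₁ : h₁ = fun x : ℝ => ((k : ℂ) * z / η) * Complex.sinh (z * ((ℓ : ℂ) - (x : ℂ))) +
      ((g : ℂ) * s / η) * Complex.sinh (z * ((p : ℂ) - (x : ℂ))) *
        Complex.sinh (z * ((ℓ : ℂ) - (p : ℂ))))
    (hh₂ : h₂ = fun x : ℝ => ((k : ℂ) * z / η) * Complex.sinh (z * ((ℓ : ℂ) - (x : ℂ)))) :
    h₁ 0 = 1 ∧ h₂ ℓ = 0 ∧ h₁ p = h₂ p ∧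
      (g : ℂ) * s * h₁ p = (k : ℂ) * (deriv h₂ p - deriv h₁ p) :=
  boundary_forcing_branches_boundary_interface_general ℓ k p g s z η hη hη0 h₁ h₂ hh₁ hh₂
end

section
/- For every complex number s and every complex z ≠ 0 with k·z² = s² + d·s such that η ≠ 0, the average over [0, ℓ] of the boundary-forcing displacement transfer function equals the output transfer function of Theorem 4.1: (1/ℓ)·( ∫₀^𝔭 ((k·z/η)·sinh(z·(ℓ − x)) + (𝔤·s/η)·sinh(z·(𝔭 − x))·sinh(z·(ℓ − 𝔭))) dx + ∫_𝔭^ℓ (k·z/η)·sinh(z·(ℓ − x)) dx ) = β₁/(z·ℓ·η). -/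
lemma integral_sinh_shift (z c : ℂ) (hz0 : z ≠ 0) (a b : ℝ) :
    (∫ x in a..b, Complex.sinh (z * (c - (x : ℂ)))) =
      (Complex.cosh (z * (c - (a : ℂ))) - Complex.cosh (z * (c - (b : ℂ)))) / z := by
  have hderiv : ∀ x ∈ Set.uIcc a b,
      HasDerivAt (fun x : ℝ => -Complex.cosh (z * (c - (x : ℂ))) / z)
        (Complex.sinh (z * (c - (x : ℂ)))) x := by
    intro x _
    have h1 : HasDerivAt (fun x : ℝ => z * (c - (x : ℂ))) (-z) x := by
      have := ((Complex.ofRealCLM.hasDerivAt (x := x)).const_sub c).const_mul z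
      simpa using this
    have h2 := (Complex.hasDerivAt_cosh (z * (c - (x : ℂ)))).comp x h1
    have h3 := (h2.neg).div_const z
    have h4 : -(Complex.sinh (z * (c - (x : ℂ))) * -z) / z
        = Complex.sinh (z * (c - (x : ℂ))) := by field_simp
    rw [h4] at h3
    exact h3
  have hcont : IntervalIntegrable (fun x : ℝ => Complex.sinh (z * (c - (x : ℂ))))
      MeasureTheory.volume a b := by
    apply Continuous.intervalIntegrable
    continuity
  have := intervalIntegral.integral_eq_sub_of_hasDerivAt hderiv hcont
  rw [this]
  ring

lemma two_sinh_half_sq (w : ℂ) : 2 * Complex.sinh (w / 2) ^ 2 = Complex.cosh w - 1 := by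
  have h1 := Complex.cosh_two_mul (w / 2)
  have hw : 2 * (w / 2) = w := by ring
  rw [hw] at h1
  have hsub := Complex.cosh_sq_sub_sinh_sq (w / 2)
  linear_combination -h1 - hsub

/-- The average over `[0, ℓ]` of the boundary-forcing displacement transfer function
equals the boundary-forcing output transfer function `H(s) = β₁/(z ℓ η)`. -/
theorem boundary_forcing_average_displacement_eq_output
    (ℓ k d p g : ℝ) (hℓ : 0 < ℓ) (hk : 0 < k) (hd : 0 < d)
    (hp0 : 0 < p) (hpℓ : p < ℓ) (hg : 0 ≤ g)
    (s z : ℂ) (hz0 : z ≠ 0) (hz : (k : ℂ) * z ^ 2 = s ^ 2 + (d : ℂ) * s)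
    (β₁ η : ℂ)
    (hβ₁ : β₁ = 2 * (k : ℂ) * z * Complex.sinh (z * (ℓ : ℂ) / 2) ^ 2 +
      2 * (g : ℂ) * s * Complex.sinh (z * ((ℓ : ℂ) - (p : ℂ))) *
        Complex.sinh (z * (p : ℂ) / 2) ^ 2)
    (hη : η = (k : ℂ) * z * Complex.sinh (z * (ℓ : ℂ)) +
      (g : ℂ) * s * Complex.sinh (z * (p : ℂ)) * Complex.sinh (z * ((ℓ : ℂ) - (p : ℂ))))
    (hη0 : η ≠ 0) :
    (1 / (ℓ : ℂ)) *
      ((∫ x in (0 : ℝ)..p, ((k : ℂ) * z / η) * Complex.sinh (z * ((ℓ : ℂ) - (x : ℂ))) +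
          ((g : ℂ) * s / η) * Complex.sinh (z * ((p : ℂ) - (x : ℂ))) *
            Complex.sinh (z * ((ℓ : ℂ) - (p : ℂ)))) +
        (∫ x in p..ℓ, ((k : ℂ) * z / η) * Complex.sinh (z * ((ℓ : ℂ) - (x : ℂ))))) =
      β₁ / (z * (ℓ : ℂ) * η) := by
  have hIℓ : ∀ a b : ℝ, IntervalIntegrable
      (fun x : ℝ => Complex.sinh (z * ((ℓ : ℂ) - (x : ℂ)))) MeasureTheory.volume a b := by
    intro a b; apply Continuous.intervalIntegrable; continuity
  have hIp : ∀ a b : ℝ, IntervalIntegrable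
      (fun x : ℝ => Complex.sinh (z * ((p : ℂ) - (x : ℂ)))) MeasureTheory.volume a b := by
    intro a b; apply Continuous.intervalIntegrable; continuity
  have e1 : (∫ x in (0 : ℝ)..p, ((k : ℂ) * z / η) * Complex.sinh (z * ((ℓ : ℂ) - (x : ℂ))) +
      ((g : ℂ) * s / η) * Complex.sinh (z * ((p : ℂ) - (x : ℂ))) *
        Complex.sinh (z * ((ℓ : ℂ) - (p : ℂ)))) =
      ((k : ℂ) * z / η) * (∫ x in (0 : ℝ)..p, Complex.sinh (z * ((ℓ : ℂ) - (x : ℂ)))) +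
      ((g : ℂ) * s / η) * Complex.sinh (z * ((ℓ : ℂ) - (p : ℂ))) *
        (∫ x in (0 : ℝ)..p, Complex.sinh (z * ((p : ℂ) - (x : ℂ)))) := by
    rw [intervalIntegral.integral_add ((hIℓ 0 p).const_mul _)
      (((hIp 0 p).const_mul _).mul_const _),
      intervalIntegral.integral_const_mul, intervalIntegral.integral_mul_const,
      intervalIntegral.integral_const_mul]
    ring
  have e2 : (∫ x in p..ℓ, ((k : ℂ) * z / η) * Complex.sinh (z * ((ℓ : ℂ) - (x : ℂ)))) =
      ((k : ℂ) * z / η) * (∫ x in p..ℓ, Complex.sinh (z * ((ℓ : ℂ) - (x : ℂ)))) :=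
    intervalIntegral.integral_const_mul _ _
  rw [e1, e2, integral_sinh_shift z ℓ hz0 0 p, integral_sinh_shift z ℓ hz0 p ℓ,
    integral_sinh_shift z p hz0 0 p]
  have hc1 : 2 * Complex.sinh (z * (ℓ : ℂ) / 2) ^ 2 = Complex.cosh (z * (ℓ : ℂ)) - 1 :=
    two_sinh_half_sq _
  have hc2 : 2 * Complex.sinh (z * (p : ℂ) / 2) ^ 2 = Complex.cosh (z * (p : ℂ)) - 1 :=
    two_sinh_half_sq _
  have hℓ0 : (ℓ : ℂ) ≠ 0 := by exact_mod_cast hℓ.ne'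
  field_simp [hβ₁]
  push_cast
  simp only [mul_sub, sub_zero, mul_zero, sub_self, Complex.cosh_zero]
  ring_nf
  ring_nf at hc1 hc2
  linear_combination (norm := ring_nf) -hβ₁ - ((k : ℂ) * z) * hc1 -
    ((g : ℂ) * s * Complex.sinh (z * (ℓ : ℂ) - z * (p : ℂ))) * hc2
end

section
/- The boundary-forcing output transfer function H(s) = β₁(s)/(z(s)·ℓ·η(s)) has a removable singularity at s = 0 with limit value 1/2: the function s ↦ β₁(s)/(z(s)·ℓ·η(s)) tends to 1/2 as s → 0 within the set {s ∈ ℂ : s ≠ 0 and s ≠ −d}. In particular the limit is independent of the string parameters ℓ and k and of the damping parameters 𝔭 and 𝔤. -/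
open Complex Filter Topology

lemma sinh_slope (c : ℂ) :
    Tendsto (fun w : ℂ => Complex.sinh (w * c) / w) (𝓝[≠] 0) (𝓝 c) := by
  have h : HasDerivAt (fun w : ℂ => Complex.sinh (w * c)) c 0 := by
    have := (Complex.hasDerivAt_sinh ((0:ℂ) * c)).comp 0 ((hasDerivAt_id (0:ℂ)).mul_const c)
    simpa [Function.comp_def] using this
  have := hasDerivAt_iff_tendsto_slope.mp h
  refine this.congr' ?_
  filter_upwards [self_mem_nhdsWithin] with w hw
  simp [slope, hw, div_eq_inv_mul]

/-- The boundary-forcing output transfer function `H(s) = β₁(s)/(z(s) ℓ η(s))` has a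
removable singularity at `s = 0` with limit value `1/2`, where `z(s)` is the principal
square root of `(s² + d s)/k`. -/
theorem boundary_forcing_output_limit_at_zero
    (ℓ k d p g : ℝ) (hℓ : 0 < ℓ) (hk : 0 < k) (hd : 0 < d)
    (hp0 : 0 < p) (hpℓ : p < ℓ) (hg : 0 ≤ g) :
    Filter.Tendsto
      (fun s : ℂ =>
        let z : ℂ := ((s ^ 2 + (d : ℂ) * s) / (k : ℂ)) ^ (1 / 2 : ℂ)
        let β₁ : ℂ := 2 * (k : ℂ) * z * Complex.sinh (z * (ℓ : ℂ) / 2) ^ 2 +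
          2 * (g : ℂ) * s * Complex.sinh (z * ((ℓ : ℂ) - (p : ℂ))) *
            Complex.sinh (z * (p : ℂ) / 2) ^ 2
        let η : ℂ := (k : ℂ) * z * Complex.sinh (z * (ℓ : ℂ)) +
          (g : ℂ) * s * Complex.sinh (z * (p : ℂ)) * Complex.sinh (z * ((ℓ : ℂ) - (p : ℂ)))
        β₁ / (z * (ℓ : ℂ) * η))
      (nhdsWithin 0 {s : ℂ | s ≠ 0 ∧ s ≠ -(d : ℂ)})
      (nhds (1 / 2 : ℂ)) := by
  set S : Set ℂ := {s : ℂ | s ≠ 0 ∧ s ≠ -(d : ℂ)}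
  set z : ℂ → ℂ := fun s => ((s ^ 2 + (d : ℂ) * s) / (k : ℂ)) ^ (1 / 2 : ℂ) with hzdef
  have hk0 : (k : ℂ) ≠ 0 := by exact_mod_cast hk.ne'
  have hℓ0 : (ℓ : ℂ) ≠ 0 := by exact_mod_cast hℓ.ne'
  -- z s ≠ 0 on S
  have hzne : ∀ s ∈ S, z s ≠ 0 := by
    intro s hs
    have h1 : s ^ 2 + (d : ℂ) * s ≠ 0 := by
      have : s ^ 2 + (d : ℂ) * s = s * (s + d) := by ring
      rw [this]
      exact mul_ne_zero hs.1 (by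
        intro h
        exact hs.2 (by linear_combination h))
    simp [z, Complex.cpow_eq_zero_iff, h1, hk0]
  -- z tends to 0
  have hz0 : Tendsto z (𝓝 0) (𝓝 0) := by
    have hbase : Tendsto (fun s : ℂ => (s ^ 2 + (d : ℂ) * s) / (k : ℂ)) (𝓝 0) (𝓝 0) := by
      have : Continuous (fun s : ℂ => (s ^ 2 + (d : ℂ) * s) / (k : ℂ)) := by continuity
      have := this.tendsto 0
      simpa using this
    have hc : ContinuousAt (fun x : ℂ × ℂ => x.1 ^ x.2) (0, (1/2 : ℂ)) :=
      Complex.continuousAt_cpow_zero_of_re_pos (by norm_num)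
    have h := hc.tendsto.comp (hbase.prodMk_nhds tendsto_const_nhds)
    have h0 : ((0:ℂ) ^ (1/2:ℂ)) = 0 := Complex.zero_cpow (by norm_num)
    rw [h0] at h
    exact h
  have hzS : Tendsto z (𝓝[S] 0) (𝓝[≠] 0) := by
    refine tendsto_nhdsWithin_iff.mpr ⟨hz0.mono_left nhdsWithin_le_nhds, ?_⟩
    filter_upwards [self_mem_nhdsWithin] with s hs using hzne s hs
  have hsS : Tendsto (fun s : ℂ => s) (𝓝[S] 0) (𝓝 0) := tendsto_nhdsWithin_of_tendsto_nhds tendsto_id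
  -- sinh ratios
  have hr : ∀ c : ℂ, Tendsto (fun s => Complex.sinh (z s * c) / z s) (𝓝[S] 0) (𝓝 c) :=
    fun c => (sinh_slope c).comp hzS
  -- numerator and denominator after dividing by z^3
  set N : ℂ → ℂ := fun s =>
    2 * (k : ℂ) * (Complex.sinh (z s * ((ℓ : ℂ)/2)) / z s) ^ 2 +
      2 * (g : ℂ) * s * (Complex.sinh (z s * ((ℓ : ℂ) - (p : ℂ))) / z s) *
        (Complex.sinh (z s * ((p : ℂ)/2)) / z s) ^ 2 with hN
  set D : ℂ → ℂ := fun s =>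
    (ℓ : ℂ) * ((k : ℂ) * (Complex.sinh (z s * (ℓ : ℂ)) / z s) +
      (g : ℂ) * s * (Complex.sinh (z s * (p : ℂ)) / z s) *
        (Complex.sinh (z s * ((ℓ : ℂ) - (p : ℂ))) / z s)) with hD
  have hNlim : Tendsto N (𝓝[S] 0)
      (𝓝 (2 * (k:ℂ) * ((ℓ:ℂ)/2)^2 + 2 * (g:ℂ) * 0 * ((ℓ:ℂ) - (p:ℂ)) * ((p:ℂ)/2)^2)) :=
    ((tendsto_const_nhds.mul ((hr ((ℓ : ℂ)/2)).pow 2)).add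
      ((((tendsto_const_nhds.mul hsS).mul (hr ((ℓ : ℂ) - (p : ℂ)))).mul ((hr ((p : ℂ)/2)).pow 2))))
  have hNval : 2 * (k:ℂ) * ((ℓ:ℂ)/2)^2 + 2 * (g:ℂ) * 0 * ((ℓ:ℂ) - (p:ℂ)) * ((p:ℂ)/2)^2
      = 2 * (k:ℂ) * ((ℓ:ℂ)/2)^2 := by ring
  rw [hNval] at hNlim
  have hDlim : Tendsto D (𝓝[S] 0)
      (𝓝 ((ℓ:ℂ) * ((k:ℂ) * (ℓ:ℂ) + (g:ℂ) * 0 * (p:ℂ) * ((ℓ:ℂ) - (p:ℂ))))) :=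
    tendsto_const_nhds.mul ((tendsto_const_nhds.mul (hr (ℓ : ℂ))).add
      (((tendsto_const_nhds.mul hsS).mul (hr (p : ℂ))).mul (hr ((ℓ : ℂ) - (p : ℂ)))))
  have hDval : (ℓ:ℂ) * ((k:ℂ) * (ℓ:ℂ) + (g:ℂ) * 0 * (p:ℂ) * ((ℓ:ℂ) - (p:ℂ)))
      = (ℓ:ℂ) * ((k:ℂ) * (ℓ:ℂ)) := by ring
  rw [hDval] at hDlim
  have hDne : (ℓ : ℂ) * ((k : ℂ) * (ℓ : ℂ)) ≠ 0 := by
    exact mul_ne_zero hℓ0 (mul_ne_zero hk0 hℓ0)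
  have hlim : Tendsto (fun s => N s / D s) (𝓝[S] 0)
      (𝓝 ((2 * k * ((ℓ : ℂ)/2)^2) / ((ℓ : ℂ) * ((k : ℂ) * (ℓ : ℂ))))) :=
    hNlim.div hDlim hDne
  have hval : (2 * k * ((ℓ : ℂ)/2)^2) / ((ℓ : ℂ) * ((k : ℂ) * (ℓ : ℂ))) = 1/2 := by
    field_simp
  rw [hval] at hlim
  refine hlim.congr' ?_
  filter_upwards [self_mem_nhdsWithin] with s hs
  have hz : z s ≠ 0 := hzne s hs
  simp only
  have hzz : ((s ^ 2 + (d : ℂ) * s) / (k : ℂ)) ^ (1 / 2 : ℂ) = z s := rfl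
  rw [hzz]
  have e1 : z s * (ℓ:ℂ) / 2 = z s * ((ℓ:ℂ)/2) := by ring
  have e2 : z s * (p:ℂ) / 2 = z s * ((p:ℂ)/2) := by ring
  rw [e1, e2]
  rw [hN, hD]
  simp only
  have h1 : 2 * (k:ℂ) * z s * Complex.sinh (z s * ((ℓ:ℂ)/2)) ^ 2 +
      2 * (g:ℂ) * s * Complex.sinh (z s * ((ℓ:ℂ) - (p:ℂ))) * Complex.sinh (z s * ((p:ℂ)/2)) ^ 2
      = (z s)^3 * (2 * (k:ℂ) * (Complex.sinh (z s * ((ℓ:ℂ)/2)) / z s) ^ 2 +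
        2 * (g:ℂ) * s * (Complex.sinh (z s * ((ℓ:ℂ) - (p:ℂ))) / z s) *
          (Complex.sinh (z s * ((p:ℂ)/2)) / z s) ^ 2) := by
    field_simp
  have h2 : z s * (ℓ:ℂ) * ((k:ℂ) * z s * Complex.sinh (z s * (ℓ:ℂ)) +
      (g:ℂ) * s * Complex.sinh (z s * (p:ℂ)) * Complex.sinh (z s * ((ℓ:ℂ) - (p:ℂ))))
      = (z s)^3 * ((ℓ:ℂ) * ((k:ℂ) * (Complex.sinh (z s * (ℓ:ℂ)) / z s) +
        (g:ℂ) * s * (Complex.sinh (z s * (p:ℂ)) / z s) *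
          (Complex.sinh (z s * ((ℓ:ℂ) - (p:ℂ))) / z s))) := by
    field_simp
  rw [h1, h2, mul_div_mul_left _ _ (pow_ne_zero 3 hz)]
end

section
/- Infinite-viscosity limit of the boundary-forcing output transfer function: fix a complex number s ≠ 0 and a complex z ≠ 0 with k·z² = s² + d·s such that sinh(z·𝔭) ≠ 0 and sinh(z·(ℓ−𝔭)) ≠ 0. Then, as the real viscosity 𝔤 tends to +∞, the function 𝔤 ↦ β₁(𝔤)/(z·ℓ·η(𝔤)) tends to tanh(z·𝔭/2)/(z·ℓ). -/
/-- Infinite-viscosity limit of the boundary-forcing output transfer function. -/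
theorem boundary_forcing_output_infinite_viscosity_limit
    (ℓ k d p : ℝ) (hℓ : 0 < ℓ) (hk : 0 < k) (hd : 0 < d)
    (hp0 : 0 < p) (hpℓ : p < ℓ)
    (s z : ℂ) (hs0 : s ≠ 0) (hz0 : z ≠ 0)
    (hz : (k : ℂ) * z ^ 2 = s ^ 2 + (d : ℂ) * s)
    (hsp : Complex.sinh (z * (p : ℂ)) ≠ 0)
    (hslp : Complex.sinh (z * ((ℓ : ℂ) - (p : ℂ))) ≠ 0) :
    Filter.Tendsto
      (fun g : ℝ =>
        (2 * (k : ℂ) * z * Complex.sinh (z * (ℓ : ℂ) / 2) ^ 2 +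
            2 * (g : ℂ) * s * Complex.sinh (z * ((ℓ : ℂ) - (p : ℂ))) *
              Complex.sinh (z * (p : ℂ) / 2) ^ 2) /
          (z * (ℓ : ℂ) *
            ((k : ℂ) * z * Complex.sinh (z * (ℓ : ℂ)) +
              (g : ℂ) * s * Complex.sinh (z * (p : ℂ)) *
                Complex.sinh (z * ((ℓ : ℂ) - (p : ℂ))))))
      Filter.atTop
      (nhds (Complex.tanh (z * (p : ℂ) / 2) / (z * (ℓ : ℂ)))) := by
  obtain ⟨A, hA⟩ : ∃ A : ℂ, A = 2 * (k : ℂ) * z * Complex.sinh (z * (ℓ : ℂ) / 2) ^ 2 :=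
    ⟨_, rfl⟩
  obtain ⟨B, hB⟩ : ∃ B : ℂ, B = 2 * s * Complex.sinh (z * ((ℓ : ℂ) - (p : ℂ))) *
      Complex.sinh (z * (p : ℂ) / 2) ^ 2 := ⟨_, rfl⟩
  obtain ⟨C, hCd⟩ : ∃ C : ℂ, C = z * (ℓ : ℂ) := ⟨_, rfl⟩
  obtain ⟨D, hD⟩ : ∃ D : ℂ, D = (k : ℂ) * z * Complex.sinh (z * (ℓ : ℂ)) := ⟨_, rfl⟩
  obtain ⟨E, hE⟩ : ∃ E : ℂ, E = s * Complex.sinh (z * (p : ℂ)) *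
      Complex.sinh (z * ((ℓ : ℂ) - (p : ℂ))) := ⟨_, rfl⟩
  have hℓ0 : (ℓ : ℂ) ≠ 0 := by exact_mod_cast hℓ.ne'
  have hCne : C ≠ 0 := by rw [hCd]; exact mul_ne_zero hz0 hℓ0
  have hEne : E ≠ 0 := by rw [hE]; exact mul_ne_zero (mul_ne_zero hs0 hsp) hslp
  have hsinh2 : Complex.sinh (z * (p : ℂ)) =
      2 * Complex.sinh (z * (p : ℂ) / 2) * Complex.cosh (z * (p : ℂ) / 2) := by
    have h : z * (p : ℂ) = 2 * (z * (p : ℂ) / 2) := by ring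
    rw [h, Complex.sinh_two_mul]
    ring_nf
  have hcosh : Complex.cosh (z * (p : ℂ) / 2) ≠ 0 := by
    intro h
    apply hsp
    rw [hsinh2, h, mul_zero]
  have hsh : Complex.sinh (z * (p : ℂ) / 2) ≠ 0 := by
    intro h
    apply hsp
    rw [hsinh2, h]; ring
  have hlim_val : (A * 0 + B) / (C * (D * 0 + E)) =
      Complex.tanh (z * (p : ℂ) / 2) / (z * (ℓ : ℂ)) := by
    rw [Complex.tanh_eq_sinh_div_cosh]
    simp only [mul_zero, zero_add]
    rw [hB, hE, hsinh2, hCd, div_div]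
    have h2 : 2 * Complex.sinh (z * (p : ℂ) / 2) * Complex.cosh (z * (p : ℂ) / 2) ≠ 0 :=
      hsinh2 ▸ hsp
    rw [div_eq_div_iff
      (mul_ne_zero (mul_ne_zero hz0 hℓ0) (mul_ne_zero (mul_ne_zero hs0 h2) hslp))
      (mul_ne_zero hcosh (mul_ne_zero hz0 hℓ0))]
    ring
  have hinv : Filter.Tendsto (fun g : ℝ => ((g : ℂ))⁻¹) Filter.atTop (nhds 0) := by
    have h2 := (Complex.continuous_ofReal.tendsto 0).comp
      (tendsto_inv_atTop_zero (𝕜 := ℝ))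
    exact h2.congr fun g => by simp
  have hmain : Filter.Tendsto (fun g : ℝ => (A * (g : ℂ)⁻¹ + B) / (C * (D * (g : ℂ)⁻¹ + E)))
      Filter.atTop (nhds ((A * 0 + B) / (C * (D * 0 + E)))) := by
    apply Filter.Tendsto.div
    · exact (hinv.const_mul A).add tendsto_const_nhds
    · exact Filter.Tendsto.const_mul C ((hinv.const_mul D).add tendsto_const_nhds)
    · simpa [mul_zero, zero_add] using mul_ne_zero hCne hEne
  rw [← hlim_val]
  apply hmain.congr'
  filter_upwards [Filter.eventually_gt_atTop (0 : ℝ)] with g hg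
  have hgne : (g : ℂ) ≠ 0 := by exact_mod_cast hg.ne'
  have hnum : A + 2 * (g : ℂ) * s * Complex.sinh (z * ((ℓ : ℂ) - (p : ℂ))) *
      Complex.sinh (z * (p : ℂ) / 2) ^ 2 = (g : ℂ) * (A * (g : ℂ)⁻¹ + B) := by
    rw [hB]; linear_combination (-A) * (mul_inv_cancel₀ hgne)
  have hden : C * (D + (g : ℂ) * s * Complex.sinh (z * (p : ℂ)) *
      Complex.sinh (z * ((ℓ : ℂ) - (p : ℂ)))) =
      (g : ℂ) * (C * (D * (g : ℂ)⁻¹ + E)) := by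
    rw [hE]; linear_combination (-(C * D)) * (mul_inv_cancel₀ hgne)
  rw [← hA, ← hD, ← hCd, hnum, hden, mul_div_mul_left _ _ hgne]
end

section
/- Unique solvability of the interface linear system in the uniform-forcing case: let s ∈ ℂ with s² + d·s ≠ 0, let z ≠ 0 be a complex number with k·z² = s² + d·s, and assume η ≠ 0. Then the quadruple (A₁, B₁, A₂, B₂) ∈ ℂ⁴ satisfies the four equations (i) 1 + A₁ = 0, (ii) 1 + A₂ = 0, (iii) 1 + cosh(z·𝔭)·A₁ + sinh(z·𝔭)·B₁ = 1 + cosh(z·(ℓ−𝔭))·A₂ + sinh(z·(ℓ−𝔭))·B₂, and (iv) 𝔤·s·(1 + cosh(z·𝔭)·A₁ + sinh(z·𝔭)·B₁) = −k·z·(sinh(z·(ℓ−𝔭))·A₂ + cosh(z·(ℓ−𝔭))·B₂ + sinh(z·𝔭)·A₁ + cosh(z·𝔭)·B₁) if and only if A₁ = −1, A₂ = −1, B₁ = β₁/η, and B₂ = β₂/η. -/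
/-- Unique solvability of the interface linear system in the uniform-forcing case:
`(A₁, B₁, A₂, B₂)` satisfies the four interface/boundary equations if and only if
`A₁ = -1`, `A₂ = -1`, `B₁ = β₁/η`, and `B₂ = β₂/η`. -/
theorem uniform_forcing_interface_system_unique_solution
    (ℓ k d p g : ℝ) (hℓ : 0 < ℓ) (hk : 0 < k) (hd : 0 < d)
    (hp0 : 0 < p) (hpℓ : p < ℓ) (hg : 0 ≤ g)
    (s z : ℂ) (hs : s ^ 2 + (d : ℂ) * s ≠ 0) (hz0 : z ≠ 0)
    (hz : (k : ℂ) * z ^ 2 = s ^ 2 + (d : ℂ) * s)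
    (β₁ β₂ η : ℂ)
    (hβ₁ : β₁ = 2 * (k : ℂ) * z * Complex.sinh (z * (ℓ : ℂ) / 2) ^ 2 +
      2 * (g : ℂ) * s * Complex.sinh (z * ((ℓ : ℂ) - (p : ℂ))) *
        Complex.sinh (z * (p : ℂ) / 2) ^ 2)
    (hβ₂ : β₂ = 2 * (k : ℂ) * z * Complex.sinh (z * (ℓ : ℂ) / 2) ^ 2 +
      2 * (g : ℂ) * s * Complex.sinh (z * (p : ℂ)) *
        Complex.sinh (z * ((ℓ : ℂ) - (p : ℂ)) / 2) ^ 2)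
    (hη : η = (k : ℂ) * z * Complex.sinh (z * (ℓ : ℂ)) +
      (g : ℂ) * s * Complex.sinh (z * (p : ℂ)) * Complex.sinh (z * ((ℓ : ℂ) - (p : ℂ))))
    (hη0 : η ≠ 0)
    (A₁ B₁ A₂ B₂ : ℂ) :
    (1 + A₁ = 0 ∧
      1 + A₂ = 0 ∧
      1 + Complex.cosh (z * (p : ℂ)) * A₁ + Complex.sinh (z * (p : ℂ)) * B₁ =
        1 + Complex.cosh (z * ((ℓ : ℂ) - (p : ℂ))) * A₂ +
          Complex.sinh (z * ((ℓ : ℂ) - (p : ℂ))) * B₂ ∧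
      (g : ℂ) * s *
          (1 + Complex.cosh (z * (p : ℂ)) * A₁ + Complex.sinh (z * (p : ℂ)) * B₁) =
        -((k : ℂ) * z) *
          (Complex.sinh (z * ((ℓ : ℂ) - (p : ℂ))) * A₂ +
            Complex.cosh (z * ((ℓ : ℂ) - (p : ℂ))) * B₂ +
            Complex.sinh (z * (p : ℂ)) * A₁ + Complex.cosh (z * (p : ℂ)) * B₁)) ↔
    (A₁ = -1 ∧ A₂ = -1 ∧ B₁ = β₁ / η ∧ B₂ = β₂ / η) := by
  subst hβ₁ hβ₂ hη
  set K : ℂ := (k : ℂ) * z with hK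
  set G : ℂ := (g : ℂ) * s with hG
  set cp : ℂ := Complex.cosh (z * (p : ℂ)) with hcp
  set sp : ℂ := Complex.sinh (z * (p : ℂ)) with hsp
  set cq : ℂ := Complex.cosh (z * ((ℓ : ℂ) - (p : ℂ))) with hcq
  set sq : ℂ := Complex.sinh (z * ((ℓ : ℂ) - (p : ℂ))) with hsq
  have i1 : Complex.sinh (z * (ℓ : ℂ)) = sp * cq + cp * sq := by
    rw [hsp, hcq, hcp, hsq, show z * (ℓ : ℂ) = z * (p : ℂ) + z * ((ℓ : ℂ) - (p : ℂ)) by ring,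
      Complex.sinh_add]
  have i2 : Complex.cosh (z * (ℓ : ℂ)) = cp * cq + sp * sq := by
    rw [hsp, hcq, hcp, hsq, show z * (ℓ : ℂ) = z * (p : ℂ) + z * ((ℓ : ℂ) - (p : ℂ)) by ring,
      Complex.cosh_add]
  have i3 : Complex.cosh (z * (ℓ : ℂ)) = 2 * Complex.sinh (z * (ℓ : ℂ) / 2) ^ 2 + 1 := by
    rw [show z * (ℓ : ℂ) = 2 * (z * (ℓ : ℂ) / 2) by ring, Complex.cosh_two_mul,
      Complex.cosh_sq]
    ring
  have i4 : cp = 2 * Complex.sinh (z * (p : ℂ) / 2) ^ 2 + 1 := by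
    rw [hcp, show z * (p : ℂ) = 2 * (z * (p : ℂ) / 2) by ring, Complex.cosh_two_mul,
      Complex.cosh_sq]
    ring
  have i5 : cq = 2 * Complex.sinh (z * ((ℓ : ℂ) - (p : ℂ)) / 2) ^ 2 + 1 := by
    rw [hcq, show z * ((ℓ : ℂ) - (p : ℂ)) = 2 * (z * ((ℓ : ℂ) - (p : ℂ)) / 2) by ring,
      Complex.cosh_two_mul, Complex.cosh_sq]
    ring
  have i6 : cp ^ 2 - sp ^ 2 = 1 := Complex.cosh_sq_sub_sinh_sq _
  have i7 : cq ^ 2 - sq ^ 2 = 1 := Complex.cosh_sq_sub_sinh_sq _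
  constructor
  · rintro ⟨h1, h2, h3, h4⟩
    have hA1 : A₁ = -1 := by linear_combination h1
    have hA2 : A₂ = -1 := by linear_combination h2
    subst hA1 hA2
    refine ⟨rfl, rfl, ?_, ?_⟩
    · rw [eq_div_iff hη0]
      linear_combination (K * cq) * h3 + sq * h4 + (B₁ * K) * i1 - K * i7 - K * i2 +
        K * i3 + (G * sq) * i4
    · rw [eq_div_iff hη0]
      linear_combination sp * h4 - (G * sp + K * cp) * h3 + (B₂ * K) * i1 - K * i6 -
        K * i2 + K * i3 + (G * sp) * i5
  · rintro ⟨hA1, hA2, hB1, hB2⟩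
    subst hA1 hA2 hB1 hB2
    have key1 : sp * (2 * (k : ℂ) * z * Complex.sinh (z * (ℓ : ℂ) / 2) ^ 2 +
        2 * G * sq * Complex.sinh (z * (p : ℂ) / 2) ^ 2) -
        sq * (2 * (k : ℂ) * z * Complex.sinh (z * (ℓ : ℂ) / 2) ^ 2 +
        2 * G * sp * Complex.sinh (z * ((ℓ : ℂ) - (p : ℂ)) / 2) ^ 2) =
        (cp - cq) * (K * Complex.sinh (z * (ℓ : ℂ)) + G * sp * sq) := by
      linear_combination ((cq - cp) * K) * i1 + ((sp - sq) * K) * i2 + ((sq - sp) * K) * i3 -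
        (sp * sq * G) * i4 + (sp * sq * G) * i5 - (sq * K) * i6 + (sp * K) * i7
    have key2 : G * (1 - cp) * (K * Complex.sinh (z * (ℓ : ℂ)) + G * sp * sq) +
        G * sp * (2 * (k : ℂ) * z * Complex.sinh (z * (ℓ : ℂ) / 2) ^ 2 +
          2 * G * sq * Complex.sinh (z * (p : ℂ) / 2) ^ 2) +
        K * (-(sq + sp) * (K * Complex.sinh (z * (ℓ : ℂ)) + G * sp * sq) +
          cq * (2 * (k : ℂ) * z * Complex.sinh (z * (ℓ : ℂ) / 2) ^ 2 +
            2 * G * sp * Complex.sinh (z * ((ℓ : ℂ) - (p : ℂ)) / 2) ^ 2) +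
          cp * (2 * (k : ℂ) * z * Complex.sinh (z * (ℓ : ℂ) / 2) ^ 2 +
            2 * G * sq * Complex.sinh (z * (p : ℂ) / 2) ^ 2)) = 0 := by
      linear_combination (K * G - sq * K ^ 2 - sp * K ^ 2 - cp * K * G) * i1 +
        (cq * K ^ 2 + sp * K * G + cp * K ^ 2) * i2 -
        (cq * K ^ 2 + sp * K * G + cp * K ^ 2) * i3 -
        (sp * sq * G ^ 2 + cp * sq * K * G) * i4 - (sp * cq * K * G) * i5 +
        (cq * K ^ 2) * i6 + (sp * K * G + cp * K ^ 2) * i7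
    refine ⟨by ring, by ring, ?_, ?_⟩
    · have hinv := mul_inv_cancel₀ hη0
      linear_combination (K * Complex.sinh (z * (ℓ : ℂ)) + G * sp * sq)⁻¹ * key1 + (cp - cq) * hinv
    · field_simp
      linear_combination key2
end
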